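/- arXiv:2004.08213 — 4 statements merged into one kernel-verified Lean document; each statement's English description precedes it below -/
import Mathlib

section
/- The →-pattern reduction is soundness preserving in both directions (Lemma 1 of the paper, instantiated to the sequence operator): if W̃ is a PTree-WF-net, t₁,...,tₙ form a →-pattern in W̃, and W̃' is the →-reduced net, then W̃' is sound if and only if W̃ is sound. -/
/-- Process trees over an alphabet `A` (with `τ` represented by `tau`):
leaves are activities in `A` or `τ`, the operators `→` (seq), `×` (choice)
and `∧` (par) have `n + 1 ≥ 1` children, and the loop operator `↺` has
exactly two children. -/
inductive PTree (A : Type) : Type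
  | tau : PTree A
  | act : A → PTree A
  | seq : (n : ℕ) → (Fin (n + 1) → PTree A) → PTree A
  | choice : (n : ℕ) → (Fin (n + 1) → PTree A) → PTree A
  | par : (n : ℕ) → (Fin (n + 1) → PTree A) → PTree A
  | loop : PTree A → PTree A → PTree A

/-- A process-tree-labelled Petri net: places and transitions are subsets of
the ambient (disjoint) types `P` and `T`, the flow relation
`F ⊆ (P × T) ∪ (T × P)` is given by the arc sets `pt` and `tp`, and every
transition carries a process tree label. -/
structure LPNet (P T A : Type) where
  places : Set P
  trans : Set T
  pt : Set (P × T)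
  tp : Set (T × P)
  label : T → PTree A

variable {P T A : Type}

/-- The pre-set `•t` of a transition. -/
def preT (N : LPNet P T A) (t : T) : Set P := {p | (p, t) ∈ N.pt}

/-- The post-set `t•` of a transition. -/
def postT (N : LPNet P T A) (t : T) : Set P := {p | (t, p) ∈ N.tp}

/-- The pre-set `•p` of a place. -/
def preP (N : LPNet P T A) (p : P) : Set T := {t | (t, p) ∈ N.tp}

/-- The post-set `p•` of a place. -/
def postP (N : LPNet P T A) (p : P) : Set T := {t | (p, t) ∈ N.pt}

/-- A marking is a multiset over places, i.e., a function `P → ℕ`. A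
transition `t` of the net is enabled at `M` iff `M p > 0` for all `p ∈ •t`. -/
def Enabled (N : LPNet P T A) (M : P → ℕ) (t : T) : Prop :=
  t ∈ N.trans ∧ ∀ p ∈ preT N t, 0 < M p

/-- Firing transition `t` transforms `M` into `(M \ •t) ⊎ t•`. -/
noncomputable def fire (N : LPNet P T A) (t : T) (M : P → ℕ) : P → ℕ :=
  fun p => M p - (preT N t).indicator 1 p + (postT N t).indicator 1 p

/-- `FSeq N M σ M'` : `σ` is a firing sequence of `N` from `M` to `M'`. -/
inductive FSeq (N : LPNet P T A) : (P → ℕ) → List T → (P → ℕ) → Prop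
  | nil (M : P → ℕ) : FSeq N M [] M
  | cons (M : P → ℕ) (t : T) (σ : List T) (M' : P → ℕ) :
      Enabled N M t → FSeq N (fire N t M) σ M' → FSeq N M (t :: σ) M'

/-- `M'` is reachable from `M`. -/
def Reach (N : LPNet P T A) (M M' : P → ℕ) : Prop := ∃ σ, FSeq N M σ M'

/-- The marking identifying a set of places with one token on each element;
in particular `mark {p} = [p]`. -/
noncomputable def mark (S : Set P) : P → ℕ := S.indicator 1

/-- The directed edge relation of the net on nodes `P ⊕ T`. -/
def netEdge (N : LPNet P T A) (x y : P ⊕ T) : Prop :=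
  (∃ p t, x = Sum.inl p ∧ y = Sum.inr t ∧ (p, t) ∈ N.pt) ∨
  (∃ t p, x = Sum.inr t ∧ y = Sum.inl p ∧ (t, p) ∈ N.tp)

/-- `N` together with the designated places `p_i ≠ p_o` is a (PTree-)WF-net:
the sets of places and transitions are finite, arcs connect nodes of the net,
`p_i` is the unique place with empty pre-set, `p_o` is the unique place with
empty post-set, and every place and transition lies on a directed path from
`p_i` to `p_o`. -/
def IsWFNet (N : LPNet P T A) (pi po : P) : Prop :=
  pi ∈ N.places ∧ po ∈ N.places ∧ pi ≠ po ∧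
  N.places.Finite ∧ N.trans.Finite ∧
  (∀ a ∈ N.pt, a.1 ∈ N.places ∧ a.2 ∈ N.trans) ∧
  (∀ a ∈ N.tp, a.1 ∈ N.trans ∧ a.2 ∈ N.places) ∧
  (∀ p ∈ N.places, preP N p = ∅ ↔ p = pi) ∧
  (∀ p ∈ N.places, postP N p = ∅ ↔ p = po) ∧
  (∀ p ∈ N.places, Relation.ReflTransGen (netEdge N) (Sum.inl pi) (Sum.inl p) ∧
      Relation.ReflTransGen (netEdge N) (Sum.inl p) (Sum.inl po)) ∧
  (∀ t ∈ N.trans, Relation.ReflTransGen (netEdge N) (Sum.inl pi) (Sum.inr t) ∧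
      Relation.ReflTransGen (netEdge N) (Sum.inr t) (Sum.inl po))

/-- Soundness of a (PTree-)WF-net: (1) safeness, (2) the final marking
`[p_o]` is reachable from every reachable marking, (3) no dead transitions. -/
def Sound (N : LPNet P T A) (pi po : P) : Prop :=
  (∀ M, Reach N (mark {pi}) M → ∀ p, M p ≤ 1) ∧
  (∀ M, Reach N (mark {pi}) M → Reach N M (mark {po})) ∧
  (∀ t ∈ N.trans, ∃ M, Reach N (mark {pi}) M ∧ Enabled N M t)

open Classical

/-- `t 0, ..., t (n-1)` are pairwise-distinct transitions of `N` forming a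
`→`-pattern: each `tᵢ` uniquely enables `t_{i+1}` and no self-loops occur. -/
def SeqPattern (N : LPNet P T A) (n : ℕ) (t : ℕ → T) : Prop :=
  2 ≤ n ∧ (∀ i < n, t i ∈ N.trans) ∧
  (∀ i < n, ∀ j < n, t i = t j → i = j) ∧
  (∀ i, i + 1 < n → (postT N (t i)).Nonempty ∧ postT N (t i) = preT N (t (i + 1))) ∧
  (∀ i, i + 1 < n → ∀ p ∈ postT N (t i),
    preP N p = {t i} ∧ postP N p = {t (i + 1)}) ∧
  (⋂ i ∈ Finset.range n, postT N (t i)) = ∅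

/-- `N'` is the `→`-reduced net of `N`: the interconnecting places
`t₁• ∪ ⋯ ∪ t_{n-1}•` and the transitions `t₁,...,tₙ` are removed and replaced
by a fresh transition `t'` with pre-set `•t₁` and post-set `tₙ•`, labelled
`→(ℓ(t₁),...,ℓ(tₙ))`. -/
def SeqReduced (N N' : LPNet P T A) (n : ℕ) (t : ℕ → T) (t' : T) : Prop :=
  t' ∉ N.trans ∧
  N'.places = N.places \ ⋃ i ∈ Finset.range (n - 1), postT N (t i) ∧
  N'.trans = (N.trans \ {u | ∃ i < n, u = t i}) ∪ {t'} ∧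
  N'.pt = {a ∈ N.pt | ¬ ∃ i < n, a.2 = t i} ∪
    {a : P × T | a.1 ∈ preT N (t 0) ∧ a.2 = t'} ∧
  N'.tp = {a ∈ N.tp | ¬ ∃ i < n, a.1 = t i} ∪
    {a : T × P | a.1 = t' ∧ a.2 ∈ postT N (t (n - 1))} ∧
  N'.label = fun u =>
    if u = t' then PTree.seq (n - 1) (fun i => N.label (t i.val)) else N.label u

namespace SeqAux

variable {P T A : Type}

lemma ind_mem {S : Set P} {p : P} (h : p ∈ S) : S.indicator (1 : P → ℕ) p = 1 := by
  simp [Set.indicator_of_mem h]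

lemma ind_nmem {S : Set P} {p : P} (h : p ∉ S) : S.indicator (1 : P → ℕ) p = 0 :=
  Set.indicator_of_notMem h 1

lemma fseq_append {N : LPNet P T A} {σ₁ : List T} :
    ∀ {M M₁ M₂ : P → ℕ} {σ₂ : List T}, FSeq N M σ₁ M₁ → FSeq N M₁ σ₂ M₂ →
      FSeq N M (σ₁ ++ σ₂) M₂ := by
  induction σ₁ with
  | nil => intro M M₁ M₂ σ₂ h1 h2; cases h1; simpa using h2
  | cons a l ih =>
    intro M M₁ M₂ σ₂ h1 h2
    cases h1 with
    | cons _ _ _ _ he hf => exact FSeq.cons _ _ _ _ he (ih hf h2)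

lemma reach_trans {N : LPNet P T A} {M M₁ M₂ : P → ℕ}
    (h1 : Reach N M M₁) (h2 : Reach N M₁ M₂) : Reach N M M₂ := by
  obtain ⟨σ₁, hσ₁⟩ := h1; obtain ⟨σ₂, hσ₂⟩ := h2
  exact ⟨σ₁ ++ σ₂, fseq_append hσ₁ hσ₂⟩

/-- The interconnecting places of the pattern. -/
def midQ (N : LPNet P T A) (n : ℕ) (t : ℕ → T) : Set P :=
  ⋃ i ∈ Finset.range (n - 1), postT N (t i)

lemma mem_midQ {N : LPNet P T A} {n : ℕ} {t : ℕ → T} {p : P} :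
    p ∈ midQ N n t ↔ ∃ i, i < n - 1 ∧ p ∈ postT N (t i) := by
  simp [midQ]

section Main

variable {N N' : LPNet P T A} {pi po : P} {n : ℕ} {t : ℕ → T} {t' : T}

lemma pat_tr (hpat : SeqPattern N n t) {i : ℕ} (h : i < n) : t i ∈ N.trans :=
  hpat.2.1 i h

lemma pat_inj (hpat : SeqPattern N n t) {i j : ℕ} (hi : i < n) (hj : j < n)
    (h : t i = t j) : i = j := hpat.2.2.1 i hi j hj h

lemma pat_post_ne (hpat : SeqPattern N n t) {i : ℕ} (h : i < n - 1) :
    (postT N (t i)).Nonempty := (hpat.2.2.2.1 i (by omega)).1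

lemma pat_pre (hpat : SeqPattern N n t) {j : ℕ} (h1 : 1 ≤ j) (h2 : j < n) :
    preT N (t j) = postT N (t (j - 1)) := by
  have h := (hpat.2.2.2.1 (j - 1) (by omega)).2
  rw [show j - 1 + 1 = j from by omega] at h
  exact h.symm

lemma pat_preP (hpat : SeqPattern N n t) {i : ℕ} (h : i < n - 1) {p : P}
    (hp : p ∈ postT N (t i)) : preP N p = {t i} :=
  (hpat.2.2.2.2.1 i (by omega) p hp).1

lemma pat_postP (hpat : SeqPattern N n t) {i : ℕ} (h : i < n - 1) {p : P}
    (hp : p ∈ postT N (t i)) : postP N p = {t (i + 1)} :=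
  (hpat.2.2.2.2.1 i (by omega) p hp).2

lemma midQ_pre0 (hpat : SeqPattern N n t) {p : P} (hp : p ∈ midQ N n t) :
    p ∉ preT N (t 0) := by
  obtain ⟨i, hi, hpi⟩ := mem_midQ.mp hp
  intro hc
  have h1 : t 0 ∈ postP N p := hc
  rw [pat_postP hpat hi hpi] at h1
  have := pat_inj hpat (show 0 < n by omega) (by omega) h1
  omega

lemma midQ_unique (hpat : SeqPattern N n t) {i j : ℕ} (hi : i < n - 1)
    (hj : j < n - 1) {p : P} (hpi : p ∈ postT N (t i)) (hpj : p ∈ postT N (t j)) :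
    i = j := by
  have h1 : t j ∈ preP N p := hpj
  rw [pat_preP hpat hi hpi] at h1
  exact (pat_inj hpat (by omega) (by omega) h1).symm

lemma midQ_not_last (hpat : SeqPattern N n t) {p : P} (hp : p ∈ midQ N n t) :
    p ∉ postT N (t (n - 1)) := by
  obtain ⟨i, hi, hpi⟩ := mem_midQ.mp hp
  intro hc
  have h1 : t (n - 1) ∈ preP N p := hc
  rw [pat_preP hpat hi hpi] at h1
  have := pat_inj hpat (show n - 1 < n by omega) (by omega) h1
  omega

lemma nonpat_pre (hpat : SeqPattern N n t) {u : T} (hu : ¬ ∃ i, i < n ∧ u = t i)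
    {p : P} (hp : p ∈ midQ N n t) : p ∉ preT N u := by
  obtain ⟨i, hi, hpi⟩ := mem_midQ.mp hp
  intro hc
  have h1 : u ∈ postP N p := hc
  rw [pat_postP hpat hi hpi] at h1
  exact hu ⟨i + 1, by omega, h1⟩

lemma nonpat_post (hpat : SeqPattern N n t) {u : T} (hu : ¬ ∃ i, i < n ∧ u = t i)
    {p : P} (hp : p ∈ midQ N n t) : p ∉ postT N u := by
  obtain ⟨i, hi, hpi⟩ := mem_midQ.mp hp
  intro hc
  have h1 : u ∈ preP N p := hc
  rw [pat_preP hpat hi hpi] at h1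
  exact hu ⟨i, by omega, h1⟩

lemma pi_not_midQ (hWF : IsWFNet N pi po) (hpat : SeqPattern N n t) :
    pi ∉ midQ N n t := by
  intro hp
  obtain ⟨i, hi, hpi⟩ := mem_midQ.mp hp
  have h8 := hWF.2.2.2.2.2.2.2.1
  have : preP N pi = ∅ := (h8 pi hWF.1).mpr rfl
  rw [pat_preP hpat hi hpi] at this
  exact absurd this (by simp [Set.eq_empty_iff_forall_notMem])

lemma po_not_midQ (hWF : IsWFNet N pi po) (hpat : SeqPattern N n t) :
    po ∉ midQ N n t := by
  intro hp
  obtain ⟨i, hi, hpi⟩ := mem_midQ.mp hp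
  have h9 := hWF.2.2.2.2.2.2.2.2.1
  have : postP N po = ∅ := (h9 po hWF.2.1).mpr rfl
  rw [pat_postP hpat hi hpi] at this
  exact absurd this (by simp [Set.eq_empty_iff_forall_notMem])

lemma last_post_ne (hWF : IsWFNet N pi po) (hpat : SeqPattern N n t) :
    (postT N (t (n - 1))).Nonempty := by
  have hn := hpat.1
  have htr := pat_tr hpat (show n - 1 < n by omega)
  have hpath := (hWF.2.2.2.2.2.2.2.2.2.2 _ htr).2
  rcases Relation.ReflTransGen.cases_head hpath with heq | ⟨y, hstep, -⟩
  · exact absurd heq (by simp)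
  · rcases hstep with ⟨p, u, hx, -, -⟩ | ⟨u, p, hx, hy, harc⟩
    · exact absurd hx (by simp)
    · have : u = t (n - 1) := by
        have := hx; injection this with h; exact h.symm
      exact ⟨p, by rw [← this]; exact harc⟩

end Main
end SeqAux
namespace SeqAux
section Main2
variable {P T A : Type} {N N' : LPNet P T A} {pi po : P} {n : ℕ} {t : ℕ → T} {t' : T}

lemma trans'_iff (hred : SeqReduced N N' n t t') {u : T} :
    u ∈ N'.trans ↔ ((u ∈ N.trans ∧ ¬ ∃ i, i < n ∧ u = t i) ∨ u = t') := by
  rw [hred.2.2.1]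
  simp only [Set.mem_union, Set.mem_diff, Set.mem_setOf_eq, Set.mem_singleton_iff]

lemma preT'_t' (hWF : IsWFNet N pi po) (hred : SeqReduced N N' n t t') :
    preT N' t' = preT N (t 0) := by
  ext p
  constructor
  · intro h
    have h' : (p, t') ∈ N'.pt := h
    rw [hred.2.2.2.1] at h'
    rcases h' with ⟨hmem, -⟩ | ⟨h1, -⟩
    · exact absurd (hWF.2.2.2.2.2.1 _ hmem).2 hred.1
    · exact h1
  · intro h
    show (p, t') ∈ N'.pt
    rw [hred.2.2.2.1]
    exact Or.inr ⟨h, rfl⟩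

lemma postT'_t' (hWF : IsWFNet N pi po) (hred : SeqReduced N N' n t t') :
    postT N' t' = postT N (t (n - 1)) := by
  ext p
  constructor
  · intro h
    have h' : (t', p) ∈ N'.tp := h
    rw [hred.2.2.2.2.1] at h'
    rcases h' with ⟨hmem, -⟩ | ⟨-, h2⟩
    · exact absurd (hWF.2.2.2.2.2.2.1 _ hmem).1 hred.1
    · exact h2
  · intro h
    show (t', p) ∈ N'.tp
    rw [hred.2.2.2.2.1]
    exact Or.inr ⟨rfl, h⟩

lemma preT'_eq (hred : SeqReduced N N' n t t') {u : T}
    (hu : ¬ ∃ i, i < n ∧ u = t i) (hu' : u ≠ t') : preT N' u = preT N u := by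
  ext p
  constructor
  · intro h
    have h' : (p, u) ∈ N'.pt := h
    rw [hred.2.2.2.1] at h'
    rcases h' with ⟨hmem, -⟩ | ⟨-, h2⟩
    · exact hmem
    · exact absurd h2 hu'
  · intro h
    show (p, u) ∈ N'.pt
    rw [hred.2.2.2.1]
    exact Or.inl ⟨h, by simpa using hu⟩

lemma postT'_eq (hred : SeqReduced N N' n t t') {u : T}
    (hu : ¬ ∃ i, i < n ∧ u = t i) (hu' : u ≠ t') : postT N' u = postT N u := by
  ext p
  constructor
  · intro h
    have h' : (u, p) ∈ N'.tp := h
    rw [hred.2.2.2.2.1] at h'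
    rcases h' with ⟨hmem, -⟩ | ⟨h2, -⟩
    · exact hmem
    · exact absurd h2 hu'
  · intro h
    show (u, p) ∈ N'.tp
    rw [hred.2.2.2.2.1]
    exact Or.inl ⟨h, by simpa using hu⟩

lemma fire'_eq (hred : SeqReduced N N' n t t') {u : T}
    (hu : ¬ ∃ i, i < n ∧ u = t i) (hu' : u ≠ t') (M : P → ℕ) :
    fire N' u M = fire N u M := by
  funext p
  simp only [fire, preT'_eq hred hu hu', postT'_eq hred hu hu']

/-- Firing the whole chain `t 0, …, t j`. -/
lemma chain (hpat : SeqPattern N n t) {M : P → ℕ}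
    (hen : ∀ p ∈ preT N (t 0), 0 < M p) :
    ∀ j, j < n → ∃ σ, FSeq N M σ
      (fun p => M p - (preT N (t 0)).indicator 1 p + (postT N (t j)).indicator 1 p) := by
  intro j
  induction j with
  | zero =>
    intro h
    exact ⟨[t 0], FSeq.cons _ _ _ _ ⟨pat_tr hpat h, hen⟩ (FSeq.nil _)⟩
  | succ j ih =>
    intro h
    obtain ⟨σ, hσ⟩ := ih (by omega)
    have hpre : preT N (t (j + 1)) = postT N (t j) := by
      rw [pat_pre hpat (by omega) h, Nat.add_sub_cancel]
    set X : P → ℕ := fun p =>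
      M p - (preT N (t 0)).indicator 1 p + (postT N (t j)).indicator 1 p with hX
    have hen2 : Enabled N X (t (j + 1)) := by
      refine ⟨pat_tr hpat h, ?_⟩
      intro p hp
      rw [hpre] at hp
      simp only [hX]
      rw [ind_mem hp]
      omega
    have hfire : fire N (t (j + 1)) X =
        (fun p => M p - (preT N (t 0)).indicator 1 p +
          (postT N (t (j + 1))).indicator 1 p) := by
      funext p
      simp only [fire, hX, hpre]
      omega
    refine ⟨σ ++ [t (j + 1)], fseq_append hσ ?_⟩
    rw [← hfire]
    exact FSeq.cons _ _ _ _ hen2 (FSeq.nil _)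

lemma chain_enable (hpat : SeqPattern N n t) {M : P → ℕ}
    (hen : ∀ p ∈ preT N (t 0), 0 < M p) {j : ℕ} (hj : j < n) :
    ∃ M₂, Reach N M M₂ ∧ Enabled N M₂ (t j) := by
  rcases Nat.eq_zero_or_pos j with h0 | h1
  · subst h0
    exact ⟨M, ⟨[], FSeq.nil _⟩, ⟨pat_tr hpat hj, hen⟩⟩
  · obtain ⟨σ, hσ⟩ := chain hpat hen (j - 1) (by omega)
    refine ⟨_, ⟨σ, hσ⟩, ⟨pat_tr hpat hj, ?_⟩⟩
    intro p hp
    rw [pat_pre hpat h1 hj] at hp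
    show 0 < M p - (preT N (t 0)).indicator 1 p + (postT N (t (j - 1))).indicator 1 p
    rw [ind_mem hp]
    omega

/-- Simulation of the reduced net in the original net. -/
lemma sim (hWF : IsWFNet N pi po) (hpat : SeqPattern N n t)
    (hred : SeqReduced N N' n t t') :
    ∀ {σ : List T} {M M₂ : P → ℕ}, FSeq N' M σ M₂ → Reach N M M₂ := by
  intro σ
  induction σ with
  | nil => intro M M₂ h; cases h; exact ⟨[], FSeq.nil _⟩
  | cons u σ ih =>
    intro M M₂ h
    cases h with
    | cons _ _ _ _ he hf =>
      by_cases hu : u = t'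
      · have hen0 : ∀ p ∈ preT N (t 0), 0 < M p := by
          intro p hp
          exact he.2 p (by rw [hu, preT'_t' hWF hred]; exact hp)
        obtain ⟨σ₁, hσ₁⟩ := chain hpat hen0 (n - 1) (by have := hpat.1; omega)
        have hXeq : (fun p => M p - (preT N (t 0)).indicator 1 p +
            (postT N (t (n - 1))).indicator 1 p) = fire N' u M := by
          funext p
          show _ = M p - (preT N' u).indicator 1 p + (postT N' u).indicator 1 p
          rw [hu, preT'_t' hWF hred, postT'_t' hWF hred]
        obtain ⟨σ₂, hσ₂⟩ := ih hf
        exact ⟨σ₁ ++ σ₂, fseq_append (hXeq ▸ hσ₁) hσ₂⟩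
      · have hmem := (trans'_iff hred).mp he.1
        rcases hmem with ⟨huN, hup⟩ | h'
        · have he' : Enabled N M u :=
            ⟨huN, fun p hp => he.2 p (by rw [preT'_eq hred hup hu]; exact hp)⟩
          have hfe := fire'_eq hred hup hu M
          obtain ⟨σ₂, hσ₂⟩ := ih (show FSeq N' (fire N u M) σ M₂ from hfe ▸ hf)
          exact ⟨u :: σ₂, FSeq.cons _ _ _ _ he' hσ₂⟩
        · exact absurd h' hu

/-- Reachable markings in the reduced net have no tokens on `midQ`. -/
lemma zeroQ (hWF : IsWFNet N pi po) (hpat : SeqPattern N n t)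
    (hred : SeqReduced N N' n t t') :
    ∀ {σ : List T} {M M₂ : P → ℕ}, FSeq N' M σ M₂ →
      (∀ p ∈ midQ N n t, M p = 0) → ∀ p ∈ midQ N n t, M₂ p = 0 := by
  intro σ
  induction σ with
  | nil => intro M M₂ h hz; cases h; exact hz
  | cons u σ ih =>
    intro M M₂ h hz
    cases h with
    | cons _ _ _ _ he hf =>
      refine ih hf ?_
      intro p hp
      have hpost : (postT N' u).indicator (1 : P → ℕ) p = 0 := by
        by_cases hu : u = t'
        · subst hu
          rw [postT'_t' hWF hred]
          exact ind_nmem (midQ_not_last hpat hp)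
        · rcases (trans'_iff hred).mp he.1 with ⟨huN, hup⟩ | h'
          · rw [postT'_eq hred hup hu]
            exact ind_nmem (nonpat_post hpat hup hp)
          · exact absurd h' hu
      have := hz p hp
      simp only [fire, hpost, this]
      omega

end Main2
end SeqAux
namespace SeqAux
section Main3
variable {P T A : Type}

/-- Number of tokens on the (uniformly marked) post-set of `t i`. -/
noncomputable def cnt (N : LPNet P T A) (t : ℕ → T) (M : P → ℕ) (i : ℕ) : ℕ :=
  if h : (postT N (t i)).Nonempty then M h.some else 0

noncomputable def total (N : LPNet P T A) (n : ℕ) (t : ℕ → T) (M : P → ℕ) : ℕ :=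
  ∑ i ∈ Finset.range (n - 1), cnt N t M i

noncomputable def mu (N : LPNet P T A) (n : ℕ) (t : ℕ → T) (M : P → ℕ) : ℕ :=
  ∑ i ∈ Finset.range (n - 1), cnt N t M i * (n - 1 - i)

/-- Eager completion of a marking: clear the interconnecting places and put
all pending tokens on the post-set of the last transition of the pattern. -/
noncomputable def comp (N : LPNet P T A) (n : ℕ) (t : ℕ → T) (M : P → ℕ) : P → ℕ :=
  fun p => if p ∈ midQ N n t then 0
    else M p + total N n t M * (postT N (t (n - 1))).indicator 1 p

/-- The marking is uniform on each interconnecting post-set. -/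
def Unif (N : LPNet P T A) (n : ℕ) (t : ℕ → T) (M : P → ℕ) : Prop :=
  ∀ i < n - 1, ∀ p ∈ postT N (t i), ∀ q ∈ postT N (t i), M p = M q

variable {N N' : LPNet P T A} {pi po : P} {n : ℕ} {t : ℕ → T} {t' : T}

lemma cnt_spec (hpat : SeqPattern N n t) {M : P → ℕ} (hU : Unif N n t M)
    {i : ℕ} (hi : i < n - 1) {p : P} (hp : p ∈ postT N (t i)) :
    cnt N t M i = M p := by
  have hne := pat_post_ne hpat hi
  rw [cnt, dif_pos hne]
  exact hU i hi _ hne.some_mem _ hp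

lemma cnt_rel (hpat : SeqPattern N n t) {i : ℕ} (hi : i < n - 1)
    {M M₂ : P → ℕ} (f : ℕ → ℕ) (h : ∀ p ∈ postT N (t i), M₂ p = f (M p)) :
    cnt N t M₂ i = f (cnt N t M i) := by
  have hne := pat_post_ne hpat hi
  rw [cnt, cnt, dif_pos hne, dif_pos hne]
  exact h _ hne.some_mem

lemma cnt_pos (hpat : SeqPattern N n t) {i : ℕ} (hi : i < n - 1)
    {M : P → ℕ} (h : ∀ p ∈ postT N (t i), 0 < M p) : 0 < cnt N t M i := by
  have hne := pat_post_ne hpat hi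
  rw [cnt, dif_pos hne]
  exact h _ hne.some_mem

lemma unif_of_zeroQ {M : P → ℕ} (h : ∀ p ∈ midQ N n t, M p = 0) : Unif N n t M := by
  intro i hi p hp q hq
  rw [h p (mem_midQ.mpr ⟨i, hi, hp⟩), h q (mem_midQ.mpr ⟨i, hi, hq⟩)]

lemma total_of_zeroQ (hpat : SeqPattern N n t) {M : P → ℕ}
    (h : ∀ p ∈ midQ N n t, M p = 0) : total N n t M = 0 := by
  refine Finset.sum_eq_zero ?_
  intro i hi
  have hi' := Finset.mem_range.mp hi
  have hne := pat_post_ne hpat hi'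
  rw [cnt, dif_pos hne]
  exact h _ (mem_midQ.mpr ⟨i, hi', hne.some_mem⟩)

lemma comp_of_zeroQ (hpat : SeqPattern N n t) {M : P → ℕ}
    (h : ∀ p ∈ midQ N n t, M p = 0) : comp N n t M = M := by
  funext p
  by_cases hp : p ∈ midQ N n t
  · rw [comp, if_pos hp, h p hp]
  · rw [comp, if_neg hp, total_of_zeroQ hpat h]
    simp

lemma comp_ge {M : P → ℕ} {p : P} (hp : p ∉ midQ N n t) :
    M p ≤ comp N n t M p := by
  rw [comp, if_neg hp]
  omega

lemma mark_pi_zero (hWF : IsWFNet N pi po) (hpat : SeqPattern N n t) :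
    ∀ p ∈ midQ N n t, mark {pi} p = 0 := by
  intro p hp
  refine Set.indicator_of_notMem ?_ 1
  intro hc
  rw [Set.mem_singleton_iff] at hc
  exact pi_not_midQ hWF hpat (hc ▸ hp)

lemma mark_po_zero (hWF : IsWFNet N pi po) (hpat : SeqPattern N n t) :
    ∀ p ∈ midQ N n t, mark {po} p = 0 := by
  intro p hp
  refine Set.indicator_of_notMem ?_ 1
  intro hc
  rw [Set.mem_singleton_iff] at hc
  exact po_not_midQ hWF hpat (hc ▸ hp)

end Main3
end SeqAux
namespace SeqAux
section Main4
variable {P T A : Type} {N N' : LPNet P T A} {pi po : P} {n : ℕ} {t : ℕ → T} {t' : T}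

/-- Step lemma for a non-pattern transition. -/
lemma stepA (hpat : SeqPattern N n t) (hred : SeqReduced N N' n t t')
    {M : P → ℕ} {u : T} (hu : ¬ ∃ i, i < n ∧ u = t i)
    (he : Enabled N M u) (hU : Unif N n t M) :
    Unif N n t (fire N u M) ∧
    comp N n t (fire N u M) = fire N' u (comp N n t M) ∧
    Enabled N' (comp N n t M) u := by
  have hut' : u ≠ t' := fun h => hred.1 (h ▸ he.1)
  have hfq : ∀ p ∈ midQ N n t, fire N u M p = M p := by
    intro p hp
    show M p - (preT N u).indicator 1 p + (postT N u).indicator 1 p = M p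
    rw [ind_nmem (nonpat_pre hpat hu hp), ind_nmem (nonpat_post hpat hu hp)]
    omega
  have hU1 : Unif N n t (fire N u M) := by
    intro i hi p hp q hq
    rw [hfq p (mem_midQ.mpr ⟨i, hi, hp⟩), hfq q (mem_midQ.mpr ⟨i, hi, hq⟩)]
    exact hU i hi p hp q hq
  have htot : total N n t (fire N u M) = total N n t M := by
    refine Finset.sum_congr rfl ?_
    intro i hi
    have hi' := Finset.mem_range.mp hi
    have := cnt_rel hpat hi' (M := M) (M₂ := fire N u M) id
      (fun p hp => by rw [hfq p (mem_midQ.mpr ⟨i, hi', hp⟩)]; rfl)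
    simpa using this
  refine ⟨hU1, ?_, ?_⟩
  · funext p
    by_cases hp : p ∈ midQ N n t
    · show comp N n t (fire N u M) p =
        comp N n t M p - (preT N' u).indicator 1 p + (postT N' u).indicator 1 p
      rw [preT'_eq hred hu hut', postT'_eq hred hu hut']
      simp only [comp, if_pos hp]
      rw [ind_nmem (nonpat_pre hpat hu hp), ind_nmem (nonpat_post hpat hu hp)]
    · show comp N n t (fire N u M) p =
        comp N n t M p - (preT N' u).indicator 1 p + (postT N' u).indicator 1 p
      rw [preT'_eq hred hu hut', postT'_eq hred hu hut']
      simp only [comp, if_neg hp]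
      rw [htot, show fire N u M p
          = M p - (preT N u).indicator 1 p + (postT N u).indicator 1 p from rfl]
      by_cases hpa : p ∈ preT N u
      · rw [ind_mem hpa]; have := he.2 p hpa; omega
      · rw [ind_nmem hpa]; omega
  · refine ⟨(trans'_iff hred).mpr (Or.inl ⟨he.1, hu⟩), ?_⟩
    intro p hp
    rw [preT'_eq hred hu hut'] at hp
    have hpq : p ∉ midQ N n t := fun h => nonpat_pre hpat hu h hp
    exact lt_of_lt_of_le (he.2 p hp) (comp_ge hpq)

/-- Step lemma for the first transition of the pattern. -/
lemma stepB (hWF : IsWFNet N pi po) (hpat : SeqPattern N n t)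
    (hred : SeqReduced N N' n t t') {M : P → ℕ}
    (he : Enabled N M (t 0)) (hU : Unif N n t M) :
    Unif N n t (fire N (t 0) M) ∧
    comp N n t (fire N (t 0) M) = fire N' t' (comp N n t M) ∧
    Enabled N' (comp N n t M) t' := by
  have hn := hpat.1
  have h0 : (0 : ℕ) < n - 1 := by omega
  have hfq : ∀ p ∈ midQ N n t,
      fire N (t 0) M p = M p + (postT N (t 0)).indicator 1 p := by
    intro p hp
    show M p - (preT N (t 0)).indicator 1 p + _ = _
    rw [ind_nmem (midQ_pre0 hpat hp)]
    omega
  have hU1 : Unif N n t (fire N (t 0) M) := by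
    intro i hi p hp q hq
    rw [hfq p (mem_midQ.mpr ⟨i, hi, hp⟩), hfq q (mem_midQ.mpr ⟨i, hi, hq⟩)]
    rcases eq_or_ne i 0 with rfl | hne
    · rw [ind_mem hp, ind_mem hq, hU 0 h0 p hp q hq]
    · rw [ind_nmem (fun hc => hne (midQ_unique hpat hi h0 hp hc)),
        ind_nmem (fun hc => hne (midQ_unique hpat hi h0 hq hc)),
        hU i hi p hp q hq]
  have hcnt : ∀ i ∈ Finset.range (n - 1),
      cnt N t (fire N (t 0) M) i = cnt N t M i + (if i = 0 then 1 else 0) := by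
    intro i hi
    have hi' := Finset.mem_range.mp hi
    rcases eq_or_ne i 0 with rfl | hne
    · rw [if_pos rfl]
      refine cnt_rel hpat hi' (· + 1) ?_
      intro p hp
      rw [hfq p (mem_midQ.mpr ⟨0, h0, hp⟩), ind_mem hp]
    · rw [if_neg hne]
      have := cnt_rel hpat hi' (M := M) (M₂ := fire N (t 0) M) id (fun p hp => by
        rw [hfq p (mem_midQ.mpr ⟨i, hi', hp⟩),
          ind_nmem (fun hc => hne (midQ_unique hpat hi' h0 hp hc))]
        rfl)
      simpa using this
  have htot : total N n t (fire N (t 0) M) = total N n t M + 1 := by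
    unfold total
    rw [Finset.sum_congr rfl hcnt, Finset.sum_add_distrib,
      Finset.sum_ite_eq' (Finset.range (n - 1)) 0 (fun _ => 1),
      if_pos (Finset.mem_range.mpr h0)]
  refine ⟨hU1, ?_, ?_⟩
  · funext p
    by_cases hp : p ∈ midQ N n t
    · show comp N n t (fire N (t 0) M) p =
        comp N n t M p - (preT N' t').indicator 1 p + (postT N' t').indicator 1 p
      rw [preT'_t' hWF hred, postT'_t' hWF hred]
      simp only [comp, if_pos hp]
      rw [ind_nmem (midQ_pre0 hpat hp), ind_nmem (midQ_not_last hpat hp)]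
    · have hp0 : p ∉ postT N (t 0) := fun hc => hp (mem_midQ.mpr ⟨0, h0, hc⟩)
      show comp N n t (fire N (t 0) M) p =
        comp N n t M p - (preT N' t').indicator 1 p + (postT N' t').indicator 1 p
      rw [preT'_t' hWF hred, postT'_t' hWF hred]
      simp only [comp, if_neg hp]
      rw [htot, show fire N (t 0) M p
          = M p - (preT N (t 0)).indicator 1 p + (postT N (t 0)).indicator 1 p from rfl,
        ind_nmem hp0, Nat.add_mul, one_mul]
      by_cases hpa : p ∈ preT N (t 0)
      · rw [ind_mem hpa]; have := he.2 p hpa; omega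
      · rw [ind_nmem hpa]; omega
  · refine ⟨(trans'_iff hred).mpr (Or.inr rfl), ?_⟩
    intro p hp
    rw [preT'_t' hWF hred] at hp
    have hpq : p ∉ midQ N n t := fun h => midQ_pre0 hpat h hp
    exact lt_of_lt_of_le (he.2 p hp) (comp_ge hpq)

/-- Step lemma for a later transition of the pattern. -/
lemma stepC (hpat : SeqPattern N n t) {M : P → ℕ} {j : ℕ}
    (hj1 : 1 ≤ j) (hjn : j < n)
    (he : ∀ p ∈ preT N (t j), 0 < M p) (hU : Unif N n t M) :
    Unif N n t (fire N (t j) M) ∧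
    comp N n t (fire N (t j) M) = comp N n t M ∧
    mu N n t (fire N (t j) M) + 1 = mu N n t M := by
  have hn := hpat.1
  have hpre : preT N (t j) = postT N (t (j - 1)) := pat_pre hpat hj1 hjn
  have hj1n : j - 1 < n - 1 := by omega
  have hmemprei : ∀ i, i < n - 1 → ∀ p ∈ postT N (t i),
      (p ∈ preT N (t j) ↔ i = j - 1) := by
    intro i hi p hp
    constructor
    · intro hc; rw [hpre] at hc; exact midQ_unique hpat hi hj1n hp hc
    · intro hc; rw [hpre]; exact hc ▸ hp
  have hmemposti : ∀ i, i < n - 1 → ∀ p ∈ postT N (t i),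
      (p ∈ postT N (t j) ↔ (j < n - 1 ∧ i = j)) := by
    intro i hi p hp
    constructor
    · intro hc
      rcases lt_or_ge j (n - 1) with hlt | hge
      · exact ⟨hlt, midQ_unique hpat hi hlt hp hc⟩
      · have hj' : j = n - 1 := by omega
        exact absurd hc (by rw [hj']; exact midQ_not_last hpat (mem_midQ.mpr ⟨i, hi, hp⟩))
    · rintro ⟨hlt, rfl⟩; exact hp
  have hU1 : Unif N n t (fire N (t j) M) := by
    intro i hi p hp q hq
    show M p - (preT N (t j)).indicator 1 p + (postT N (t j)).indicator 1 p
      = M q - (preT N (t j)).indicator 1 q + (postT N (t j)).indicator 1 q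
    have e1 : (preT N (t j)).indicator (1 : P → ℕ) p
        = (preT N (t j)).indicator 1 q := by
      by_cases hc : i = j - 1
      · rw [ind_mem ((hmemprei i hi p hp).mpr hc), ind_mem ((hmemprei i hi q hq).mpr hc)]
      · rw [ind_nmem (fun h => hc ((hmemprei i hi p hp).mp h)),
          ind_nmem (fun h => hc ((hmemprei i hi q hq).mp h))]
    have e2 : (postT N (t j)).indicator (1 : P → ℕ) p
        = (postT N (t j)).indicator 1 q := by
      by_cases hc : j < n - 1 ∧ i = j
      · rw [ind_mem ((hmemposti i hi p hp).mpr hc), ind_mem ((hmemposti i hi q hq).mpr hc)]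
      · rw [ind_nmem (fun h => hc ((hmemposti i hi p hp).mp h)),
          ind_nmem (fun h => hc ((hmemposti i hi q hq).mp h))]
    rw [e1, e2, hU i hi p hp q hq]
  have hcpos : 0 < cnt N t M (j - 1) :=
    cnt_pos hpat hj1n (fun p hp => he p (by rw [hpre]; exact hp))
  have hc1 : cnt N t (fire N (t j) M) (j - 1) = cnt N t M (j - 1) - 1 := by
    refine cnt_rel hpat hj1n (· - 1) ?_
    intro p hp
    show M p - (preT N (t j)).indicator 1 p + (postT N (t j)).indicator 1 p = M p - 1
    rw [ind_mem ((hmemprei _ hj1n p hp).mpr rfl),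
      ind_nmem (fun h => by have := (hmemposti _ hj1n p hp).mp h; omega)]
    omega
  have hcother : ∀ i, i < n - 1 → i ≠ j - 1 → ¬(j < n - 1 ∧ i = j) →
      cnt N t (fire N (t j) M) i = cnt N t M i := by
    intro i hi h1 h2
    have := cnt_rel hpat hi (M := M) (M₂ := fire N (t j) M) id (fun p hp => by
      show M p - (preT N (t j)).indicator 1 p + (postT N (t j)).indicator 1 p = id (M p)
      rw [ind_nmem (fun h => h1 ((hmemprei i hi p hp).mp h)),
        ind_nmem (fun h => h2 ((hmemposti i hi p hp).mp h))]
      rfl)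
    simpa using this
  have hcj : j < n - 1 → cnt N t (fire N (t j) M) j = cnt N t M j + 1 := by
    intro hlt
    refine cnt_rel hpat hlt (· + 1) ?_
    intro p hp
    show M p - (preT N (t j)).indicator 1 p + (postT N (t j)).indicator 1 p = M p + 1
    rw [ind_nmem (fun h => by have := (hmemprei j hlt p hp).mp h; omega), ind_mem hp]
    omega
  have key : ∀ w : ℕ → ℕ,
      (∑ i ∈ Finset.range (n - 1), cnt N t (fire N (t j) M) i * w i) + w (j - 1)
        = (∑ i ∈ Finset.range (n - 1), cnt N t M i * w i)
          + (if j < n - 1 then w j else 0) := by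
    intro w
    have hsplit : ∀ i ∈ Finset.range (n - 1),
        cnt N t (fire N (t j) M) i * w i + (if i = j - 1 then w (j - 1) else 0)
          = cnt N t M i * w i + (if j < n - 1 ∧ i = j then w j else 0) := by
      intro i hi
      have hi' := Finset.mem_range.mp hi
      by_cases hc : i = j - 1
      · subst hc
        rw [if_pos rfl, if_neg (by omega : ¬(j < n - 1 ∧ j - 1 = j)), hc1]
        obtain ⟨c, hcc⟩ : ∃ c, cnt N t M (j - 1) = c + 1 :=
          ⟨cnt N t M (j - 1) - 1, by omega⟩
        rw [hcc]
        simp [Nat.add_sub_cancel, Nat.add_mul]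
      · rw [if_neg hc]
        by_cases hc2 : j < n - 1 ∧ i = j
        · obtain ⟨hlt, rfl⟩ := hc2
          rw [if_pos ⟨hlt, rfl⟩, hcj hlt, Nat.add_mul, one_mul]
          omega
        · rw [if_neg hc2, hcother i hi' hc hc2]
    have hsum := Finset.sum_congr rfl hsplit
    rw [Finset.sum_add_distrib, Finset.sum_add_distrib,
      Finset.sum_ite_eq' (Finset.range (n - 1)) (j - 1) (fun _ => w (j - 1)),
      if_pos (Finset.mem_range.mpr hj1n)] at hsum
    by_cases hlt : j < n - 1
    · have h2 : (∑ i ∈ Finset.range (n - 1),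
          if j < n - 1 ∧ i = j then w j else 0) = w j := by
        calc (∑ i ∈ Finset.range (n - 1), if j < n - 1 ∧ i = j then w j else 0)
            = ∑ i ∈ Finset.range (n - 1), if i = j then w j else 0 :=
              Finset.sum_congr rfl (fun i _ => by
                by_cases h : i = j
                · simp [h, hlt]
                · simp [h])
          _ = w j := by
              rw [Finset.sum_ite_eq' (Finset.range (n - 1)) j (fun _ => w j),
                if_pos (Finset.mem_range.mpr hlt)]
      rw [h2] at hsum
      rw [if_pos hlt]
      exact hsum
    · have h2 : (∑ i ∈ Finset.range (n - 1),
          if j < n - 1 ∧ i = j then w j else 0) = 0 :=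
        Finset.sum_eq_zero (fun i _ => if_neg (fun hc => hlt hc.1))
      rw [h2] at hsum
      rw [if_neg hlt]
      exact hsum
  have htotal : total N n t (fire N (t j) M) + 1
      = total N n t M + (if j < n - 1 then 1 else 0) := by
    have hk := key (fun _ => 1)
    simp only [mul_one] at hk
    exact hk
  have hmu : mu N n t (fire N (t j) M) + (n - 1 - (j - 1))
      = mu N n t M + (if j < n - 1 then n - 1 - j else 0) := key (fun i => n - 1 - i)
  refine ⟨hU1, ?_, ?_⟩
  · funext p
    by_cases hp : p ∈ midQ N n t
    · simp only [comp, if_pos hp]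
    · simp only [comp, if_neg hp]
      have hppre : p ∉ preT N (t j) := by
        rw [hpre]; exact fun hc => hp (mem_midQ.mpr ⟨j - 1, hj1n, hc⟩)
      rw [show fire N (t j) M p
          = M p - (preT N (t j)).indicator 1 p + (postT N (t j)).indicator 1 p from rfl,
        ind_nmem hppre]
      by_cases hlt : j < n - 1
      · have hppost : p ∉ postT N (t j) := fun hc => hp (mem_midQ.mpr ⟨j, hlt, hc⟩)
        have ht2 : total N n t (fire N (t j) M) = total N n t M := by
          rw [if_pos hlt] at htotal; omega
        rw [ind_nmem hppost, ht2]
        omega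
      · have hj' : j = n - 1 := by omega
        have ht2 : total N n t (fire N (t j) M) + 1 = total N n t M := by
          rw [if_neg hlt] at htotal; omega
        have hppost : (postT N (t j)).indicator (1 : P → ℕ) p
            = (postT N (t (n - 1))).indicator 1 p := by rw [hj']
        rw [hppost, ← ht2, Nat.add_mul, one_mul]
        by_cases hpe : p ∈ postT N (t (n - 1))
        · rw [ind_mem hpe]; omega
        · rw [ind_nmem hpe]; omega
  · by_cases hlt : j < n - 1
    · rw [if_pos hlt] at hmu; omega
    · rw [if_neg hlt] at hmu; omega
end Main4
end SeqAux
namespace SeqAux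
section Main5
variable {P T A : Type} {N N' : LPNet P T A} {pi po : P} {n : ℕ} {t : ℕ → T} {t' : T}

/-- Transfer of firing sequences from the original to the reduced net. -/
lemma transfer (hWF : IsWFNet N pi po) (hpat : SeqPattern N n t)
    (hred : SeqReduced N N' n t t') :
    ∀ {σ : List T} {M M₂ : P → ℕ}, FSeq N M σ M₂ → Unif N n t M →
      Unif N n t M₂ ∧ Reach N' (comp N n t M) (comp N n t M₂) := by
  intro σ
  induction σ with
  | nil => intro M M₂ h hU; cases h; exact ⟨hU, ⟨[], FSeq.nil _⟩⟩
  | cons u σ ih =>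
    intro M M₂ h hU
    cases h with
    | cons _ _ _ _ he hf =>
      by_cases hu : ∃ i, i < n ∧ u = t i
      · obtain ⟨j, hj, rfl⟩ := hu
        rcases Nat.eq_zero_or_pos j with h0 | h1
        · subst h0
          obtain ⟨hU1, hc, hen⟩ := stepB hWF hpat hred he hU
          obtain ⟨hU2, σ', hr⟩ := ih hf hU1
          exact ⟨hU2, ⟨t' :: σ', FSeq.cons _ _ _ _ hen (by rw [← hc]; exact hr)⟩⟩
        · obtain ⟨hU1, hc, -⟩ := stepC hpat h1 hj he.2 hU
          obtain ⟨hU2, hr⟩ := ih hf hU1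
          rw [hc] at hr
          exact ⟨hU2, hr⟩
      · obtain ⟨hU1, hc, hen⟩ := stepA hpat hred hu he hU
        obtain ⟨hU2, σ', hr⟩ := ih hf hU1
        exact ⟨hU2, ⟨u :: σ', FSeq.cons _ _ _ _ hen (by rw [← hc]; exact hr)⟩⟩

/-- The completion of a uniform marking is reachable from it in `N`. -/
lemma completion (hpat : SeqPattern N n t) :
    ∀ (k : ℕ) (M : P → ℕ), Unif N n t M → mu N n t M ≤ k →
      Reach N M (comp N n t M) := by
  intro k
  induction k with
  | zero =>
    intro M hU hmu
    have hz : ∀ p ∈ midQ N n t, M p = 0 := by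
      intro p hp
      obtain ⟨i, hi, hpi⟩ := mem_midQ.mp hp
      have h1 : cnt N t M i * (n - 1 - i) ≤ mu N n t M :=
        Finset.single_le_sum (f := fun i => cnt N t M i * (n - 1 - i))
          (fun _ _ => Nat.zero_le _) (Finset.mem_range.mpr hi)
      have h2 : cnt N t M i * (n - 1 - i) = 0 := by omega
      have h3 : cnt N t M i = 0 := by
        rcases Nat.mul_eq_zero.mp h2 with h | h
        · exact h
        · omega
      rw [← cnt_spec hpat hU hi hpi, h3]
    rw [comp_of_zeroQ hpat hz]
    exact ⟨[], FSeq.nil _⟩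
  | succ k ih =>
    intro M hU hmu
    by_cases hex : ∃ i, i < n - 1 ∧ 0 < cnt N t M i
    · obtain ⟨i, hi, hci⟩ := hex
      have hpre : preT N (t (i + 1)) = postT N (t i) := by
        rw [pat_pre hpat (by omega) (by omega), Nat.add_sub_cancel]
      have hen2 : ∀ p ∈ preT N (t (i + 1)), 0 < M p := by
        intro p hp
        rw [hpre] at hp
        rw [cnt_spec hpat hU hi hp] at hci
        exact hci
      obtain ⟨hU1, hc, hmu1⟩ := stepC hpat (by omega) (by omega) hen2 hU
      have hr := ih (fire N (t (i + 1)) M) hU1 (by omega)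
      rw [hc] at hr
      obtain ⟨σ, hσ⟩ := hr
      exact ⟨t (i + 1) :: σ, FSeq.cons _ _ _ _ ⟨pat_tr hpat (by omega), hen2⟩ hσ⟩
    · push_neg at hex
      have hz : ∀ p ∈ midQ N n t, M p = 0 := by
        intro p hp
        obtain ⟨i, hi, hpi⟩ := mem_midQ.mp hp
        have := hex i hi
        rw [← cnt_spec hpat hU hi hpi]
        omega
      rw [comp_of_zeroQ hpat hz]
      exact ⟨[], FSeq.nil _⟩

end Main5
end SeqAux
/-- The `→`-pattern reduction is soundness preserving in both directions: if `t₁,...,tₙ` form a `→`-pattern in the PTree-WF-net `N` and `N'` is the `→`-reduced net, then `N'` is sound iff `N` is sound. -/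
theorem seq_reduction_sound_iff (P T A : Type)
    (N N' : LPNet P T A) (pi po : P)
    (hWF : IsWFNet N pi po)
    (n : ℕ) (t : ℕ → T) (t' : T)
    (hpat : SeqPattern N n t)
    (hred : SeqReduced N N' n t t') :
    Sound N' pi po ↔ Sound N pi po := by
  open SeqAux in
  have hU0 : Unif N n t (mark {pi}) := unif_of_zeroQ (mark_pi_zero hWF hpat)
  have hcpi : comp N n t (mark {pi}) = mark {pi} :=
    comp_of_zeroQ hpat (mark_pi_zero hWF hpat)
  have hcpo : comp N n t (mark {po}) = mark {po} :=
    comp_of_zeroQ hpat (mark_po_zero hWF hpat)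
  constructor
  · -- Sound N' → Sound N
    rintro ⟨hsafe', hlive', hdead'⟩
    refine ⟨?_, ?_, ?_⟩
    · -- safeness
      intro M hr p
      obtain ⟨σ, hσ⟩ := hr
      obtain ⟨hU, hr'⟩ := transfer hWF hpat hred hσ hU0
      rw [hcpi] at hr'
      have hsafeC := hsafe' _ hr'
      by_cases hp : p ∈ midQ N n t
      · obtain ⟨i, hi, hpi⟩ := mem_midQ.mp hp
        have hMp : cnt N t M i = M p := cnt_spec hpat hU hi hpi
        have hle : cnt N t M i ≤ total N n t M :=
          Finset.single_le_sum (f := fun i => cnt N t M i)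
            (fun _ _ => Nat.zero_le _) (Finset.mem_range.mpr hi)
        have htot1 : total N n t M ≤ 1 := by
          by_contra hc
          obtain ⟨q, hq⟩ := last_post_ne hWF hpat
          have hqQ : q ∉ midQ N n t := fun h => midQ_not_last hpat h hq
          have h2 := hsafeC q
          rw [show comp N n t M q = (if q ∈ midQ N n t then 0 else
              M q + total N n t M * (postT N (t (n - 1))).indicator 1 q) from rfl,
            if_neg hqQ, ind_mem hq] at h2
          omega
        omega
      · have h2 := hsafeC p
        have hge := comp_ge (N := N) (n := n) (t := t) (M := M) hp
        omega
    · -- option to complete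
      intro M hr
      obtain ⟨σ, hσ⟩ := hr
      obtain ⟨hU, hr'⟩ := transfer hWF hpat hred hσ hU0
      rw [hcpi] at hr'
      have h1 : Reach N M (comp N n t M) :=
        completion hpat (mu N n t M) M hU le_rfl
      have h2 : Reach N' (comp N n t M) (mark {po}) := hlive' _ hr'
      obtain ⟨σ', hσ'⟩ := h2
      exact reach_trans h1 (sim hWF hpat hred hσ')
    · -- no dead transitions
      intro u huN
      by_cases hp : ∃ i, i < n ∧ u = t i
      · obtain ⟨j, hj, rfl⟩ := hp
        obtain ⟨M, hrM', heM'⟩ := hdead' t' ((trans'_iff hred).mpr (Or.inr rfl))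
        obtain ⟨σ, hσ⟩ := hrM'
        have hrMN : Reach N (mark {pi}) M := sim hWF hpat hred hσ
        have he0 : ∀ p ∈ preT N (t 0), 0 < M p := by
          intro p hp2
          exact heM'.2 p (by rw [preT'_t' hWF hred]; exact hp2)
        obtain ⟨M₂, hrM₂, heM₂⟩ := chain_enable hpat he0 hj
        exact ⟨M₂, reach_trans hrMN hrM₂, heM₂⟩
      · have huN' : u ∈ N'.trans := (trans'_iff hred).mpr (Or.inl ⟨huN, hp⟩)
        have hut' : u ≠ t' := fun h => hred.1 (h ▸ huN)
        obtain ⟨M, hrM', heM'⟩ := hdead' u huN'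
        obtain ⟨σ, hσ⟩ := hrM'
        have hrMN : Reach N (mark {pi}) M := sim hWF hpat hred hσ
        refine ⟨M, hrMN, huN, ?_⟩
        intro p hp2
        exact heM'.2 p (by rw [preT'_eq hred hp hut']; exact hp2)
  · -- Sound N → Sound N'
    rintro ⟨hsafe, hlive, hdead⟩
    refine ⟨?_, ?_, ?_⟩
    · -- safeness
      intro M hr p
      obtain ⟨σ, hσ⟩ := hr
      obtain ⟨σ₂, hσ₂⟩ := sim hWF hpat hred hσ
      exact hsafe M ⟨σ₂, hσ₂⟩ p
    · -- option to complete
      intro M hr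
      obtain ⟨σ, hσ⟩ := hr
      have hzQ : ∀ p ∈ midQ N n t, M p = 0 :=
        zeroQ hWF hpat hred hσ (mark_pi_zero hWF hpat)
      have hrN : Reach N (mark {pi}) M := sim hWF hpat hred hσ
      obtain ⟨σ₂, hσ₂⟩ := hlive M hrN
      obtain ⟨-, hr'⟩ := transfer hWF hpat hred hσ₂ (unif_of_zeroQ hzQ)
      rw [comp_of_zeroQ hpat hzQ, hcpo] at hr'
      exact hr'
    · -- no dead transitions
      intro u hu'
      rcases (trans'_iff hred).mp hu' with ⟨huN, hnp⟩ | rfl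
      · obtain ⟨M, hrM, heM⟩ := hdead u huN
        obtain ⟨σ, hσ⟩ := hrM
        obtain ⟨hU, hr'⟩ := transfer hWF hpat hred hσ hU0
        rw [hcpi] at hr'
        exact ⟨comp N n t M, hr', (stepA hpat hred hnp heM hU).2.2⟩
      · obtain ⟨M, hrM, heM⟩ := hdead (t 0) (pat_tr hpat (by have := hpat.1; omega))
        obtain ⟨σ, hσ⟩ := hrM
        obtain ⟨hU, hr'⟩ := transfer hWF hpat hred hσ hU0
        rw [hcpi] at hr'
        exact ⟨comp N n t M, hr', (stepB hWF hpat hred heM hU).2.2⟩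
end

section
/- The ×-pattern reduction is soundness preserving in both directions (Lemma 1 of the paper, instantiated to the exclusive-choice operator): if W̃ is a PTree-WF-net, t₁,...,tₙ form a ×-pattern in W̃, and W̃' is the ×-reduced net, then W̃' is sound if and only if W̃ is sound. -/
variable {P T A : Type}

open Classical

/-- `t 0, ..., t (n-1)` are pairwise-distinct transitions of `N` forming a
`×`-pattern: all pre-sets coincide, all post-sets coincide, no self-loops. -/
def ChoicePattern (N : LPNet P T A) (n : ℕ) (t : ℕ → T) : Prop :=
  2 ≤ n ∧ (∀ i < n, t i ∈ N.trans) ∧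
  (∀ i < n, ∀ j < n, t i = t j → i = j) ∧
  (∀ i < n, preT N (t i) = preT N (t 0)) ∧
  (∀ i < n, postT N (t i) = postT N (t 0)) ∧
  preT N (t 0) ≠ postT N (t 0)

/-- `N'` is the `×`-reduced net of `N`: the transitions `t₁,...,tₙ` are
replaced by a fresh transition `t'` with pre-set `•t₁` and post-set `t₁•`,
labelled `×(ℓ(t₁),...,ℓ(tₙ))`. -/
def ChoiceReduced (N N' : LPNet P T A) (n : ℕ) (t : ℕ → T) (t' : T) : Prop :=
  t' ∉ N.trans ∧
  N'.places = N.places ∧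
  N'.trans = (N.trans \ {u | ∃ i < n, u = t i}) ∪ {t'} ∧
  N'.pt = {a ∈ N.pt | ¬ ∃ i < n, a.2 = t i} ∪
    {a : P × T | a.1 ∈ preT N (t 0) ∧ a.2 = t'} ∧
  N'.tp = {a ∈ N.tp | ¬ ∃ i < n, a.1 = t i} ∪
    {a : T × P | a.1 = t' ∧ a.2 ∈ postT N (t 0)} ∧
  N'.label = fun u =>
    if u = t' then PTree.choice (n - 1) (fun i => N.label (t i.val)) else N.label u

/-- The `×`-pattern reduction is soundness preserving in both directions: if `t₁,...,tₙ` form a `×`-pattern in the PTree-WF-net `N` and `N'` is the `×`-reduced net, then `N'` is sound iff `N` is sound. -/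
theorem choice_reduction_sound_iff (P T A : Type)
    (N N' : LPNet P T A) (pi po : P)
    (hWF : IsWFNet N pi po)
    (n : ℕ) (t : ℕ → T) (t' : T)
    (hpat : ChoicePattern N n t)
    (hred : ChoiceReduced N N' n t t') :
    Sound N' pi po ↔ Sound N pi po := by
  obtain ⟨ht'notin, hpl, htr, hpt, htp, hlab⟩ := hred
  obtain ⟨h2n, htmem, hinj, hpre, hpost, hnepp⟩ := hpat
  have hptarc : ∀ a ∈ N.pt, a.2 ∈ N.trans := fun a ha => (hWF.2.2.2.2.2.1 a ha).2
  have htparc : ∀ a ∈ N.tp, a.1 ∈ N.trans := fun a ha => (hWF.2.2.2.2.2.2.1 a ha).1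
  have ht0 : t 0 ∈ N.trans := htmem 0 (by omega)
  have hmempt : ∀ p u, (p, u) ∈ N'.pt ↔
      (((p, u) ∈ N.pt ∧ ¬ ∃ i < n, u = t i) ∨ (p ∈ preT N (t 0) ∧ u = t')) := by
    intro p u
    rw [hpt]
    simp [Set.mem_union, Set.mem_sep_iff, Set.mem_setOf_eq]
  have hmemtp : ∀ u p, (u, p) ∈ N'.tp ↔
      (((u, p) ∈ N.tp ∧ ¬ ∃ i < n, u = t i) ∨ (u = t' ∧ p ∈ postT N (t 0))) := by
    intro u p
    rw [htp]
    simp [Set.mem_union, Set.mem_sep_iff, Set.mem_setOf_eq]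
  -- pre/post sets in the reduced net
  have hpre' : preT N' t' = preT N (t 0) := by
    ext p
    rw [preT, Set.mem_setOf_eq, hmempt]
    constructor
    · rintro (⟨h, -⟩ | ⟨h, -⟩)
      · exact absurd (hptarc _ h) ht'notin
      · exact h
    · intro h; exact Or.inr ⟨h, rfl⟩
  have hpost' : postT N' t' = postT N (t 0) := by
    ext p
    rw [postT, Set.mem_setOf_eq, hmemtp]
    constructor
    · rintro (⟨h, -⟩ | ⟨-, h⟩)
      · exact absurd (htparc _ h) ht'notin
      · exact h
    · intro h; exact Or.inr ⟨rfl, h⟩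
  have hpreO : ∀ u, u ≠ t' → (¬ ∃ i < n, u = t i) → preT N' u = preT N u := by
    intro u hu hnp
    ext p
    rw [preT, preT, Set.mem_setOf_eq, Set.mem_setOf_eq, hmempt]
    constructor
    · rintro (⟨h, -⟩ | ⟨-, h⟩)
      · exact h
      · exact absurd h hu
    · intro h; exact Or.inl ⟨h, hnp⟩
  have hpostO : ∀ u, u ≠ t' → (¬ ∃ i < n, u = t i) → postT N' u = postT N u := by
    intro u hu hnp
    ext p
    rw [postT, postT, Set.mem_setOf_eq, Set.mem_setOf_eq, hmemtp]
    constructor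
    · rintro (⟨h, -⟩ | ⟨h, -⟩)
      · exact h
      · exact absurd h hu
    · intro h; exact Or.inl ⟨h, hnp⟩
  -- firing equivalences
  have hfirePat : ∀ i < n, ∀ M, fire N' t' M = fire N (t i) M := by
    intro i hi M
    funext p
    rw [fire, fire, hpre', hpost', hpre i hi, hpost i hi]
  have hfireO : ∀ u, u ≠ t' → (¬ ∃ i < n, u = t i) → ∀ M, fire N' u M = fire N u M := by
    intro u hu hnp M
    funext p
    rw [fire, fire, hpreO u hu hnp, hpostO u hu hnp]
  have ht'mem : t' ∈ N'.trans := by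
    rw [htr]; exact Or.inr rfl
  have hOmem : ∀ u ∈ N.trans, (¬ ∃ i < n, u = t i) → u ∈ N'.trans := by
    intro u hu hnp
    rw [htr]; exact Or.inl ⟨hu, hnp⟩
  have hnet' : ∀ u ∈ N.trans, u ≠ t' := fun u hu h => ht'notin (h ▸ hu)
  -- forward simulation
  have hforward : ∀ M σ M', FSeq N M σ M' → Reach N' M M' := by
    intro M σ M' h
    induction h with
    | nil M => exact ⟨[], FSeq.nil M⟩
    | cons M u σ M' hen hseq ih =>
      obtain ⟨σ', hseq'⟩ := ih
      by_cases hp : ∃ i < n, u = t i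
      · obtain ⟨i, hi, rfl⟩ := hp
        refine ⟨t' :: σ', FSeq.cons _ _ _ _ ⟨ht'mem, ?_⟩ ?_⟩
        · intro p hpmem
          apply hen.2
          rw [hpre i hi]
          rw [hpre'] at hpmem
          exact hpmem
        · rw [hfirePat i hi M]
          exact hseq'
      · refine ⟨u :: σ', FSeq.cons _ _ _ _ ⟨hOmem u hen.1 hp, ?_⟩ ?_⟩
        · intro p hpmem
          apply hen.2
          rw [hpreO u (hnet' u hen.1) hp] at hpmem
          exact hpmem
        · rw [hfireO u (hnet' u hen.1) hp M]
          exact hseq'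
  -- backward simulation
  have hbackward : ∀ M σ M', FSeq N' M σ M' → Reach N M M' := by
    intro M σ M' h
    induction h with
    | nil M => exact ⟨[], FSeq.nil M⟩
    | cons M u σ M' hen hseq ih =>
      obtain ⟨σ', hseq'⟩ := ih
      by_cases hu : u = t'
      · subst hu
        refine ⟨t 0 :: σ', FSeq.cons _ _ _ _ ⟨ht0, ?_⟩ ?_⟩
        · intro p hpmem
          apply hen.2
          rw [hpre']
          exact hpmem
        · rw [← hfirePat 0 (by omega) M]
          exact hseq'
      · have humem : u ∈ N.trans ∧ ¬ ∃ i < n, u = t i := by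
          have := hen.1
          rw [htr] at this
          rcases this with h | h
          · exact h
          · exact absurd h hu
        refine ⟨u :: σ', FSeq.cons _ _ _ _ ⟨humem.1, ?_⟩ ?_⟩
        · intro p hpmem
          apply hen.2
          rw [hpreO u hu humem.2]
          exact hpmem
        · rw [← hfireO u hu humem.2 M]
          exact hseq'
  have hreach : ∀ M M', Reach N M M' ↔ Reach N' M M' := by
    intro M M'
    constructor
    · rintro ⟨σ, h⟩; exact hforward M σ M' h
    · rintro ⟨σ, h⟩; exact hbackward M σ M' h
  constructor
  · rintro ⟨hsafe, hcomp, hlive⟩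
    refine ⟨fun M hM p => hsafe M ((hreach _ _).1 hM) p,
      fun M hM => (hreach _ _).2 (hcomp M ((hreach _ _).1 hM)), ?_⟩
    intro u hu
    by_cases hp : ∃ i < n, u = t i
    · obtain ⟨i, hi, rfl⟩ := hp
      obtain ⟨M, hMr, hMe⟩ := hlive t' ht'mem
      refine ⟨M, (hreach _ _).2 hMr, htmem i hi, ?_⟩
      intro p hpmem
      apply hMe.2
      rw [hpre']
      rw [hpre i hi] at hpmem
      exact hpmem
    · obtain ⟨M, hMr, hMe⟩ := hlive u (hOmem u hu hp)
      refine ⟨M, (hreach _ _).2 hMr, hu, ?_⟩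
      intro p hpmem
      apply hMe.2
      rw [hpreO u (hnet' u hu) hp]
      exact hpmem
  · rintro ⟨hsafe, hcomp, hlive⟩
    refine ⟨fun M hM p => hsafe M ((hreach _ _).2 hM) p,
      fun M hM => (hreach _ _).1 (hcomp M ((hreach _ _).2 hM)), ?_⟩
    intro u hu
    by_cases hut : u = t'
    · subst hut
      obtain ⟨M, hMr, hMe⟩ := hlive (t 0) ht0
      refine ⟨M, (hreach _ _).1 hMr, ht'mem, ?_⟩
      intro p hpmem
      apply hMe.2
      rw [hpre'] at hpmem
      exact hpmem
    · have humem : u ∈ N.trans ∧ ¬ ∃ i < n, u = t i := by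
        rw [htr] at hu
        rcases hu with h | h
        · exact h
        · exact absurd h hut
      obtain ⟨M, hMr, hMe⟩ := hlive u humem.1
      refine ⟨M, (hreach _ _).1 hMr, hOmem u humem.1 humem.2, ?_⟩
      intro p hpmem
      apply hMe.2
      rw [hpreO u hut humem.2] at hpmem
      exact hpmem
end

section
/- The ∧-pattern reduction is soundness preserving in both directions (Lemma 1 of the paper, instantiated to the concurrency operator): if W̃ is a PTree-WF-net, T = {t₁,...,tₙ} form a ∧-pattern in W̃, and W̃' is the ∧-reduced net, then W̃' is sound if and only if W̃ is sound. -/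
variable {P T A : Type}

open Classical

/-- `t 0, ..., t (n-1)` are pairwise-distinct transitions of `N` forming a
`∧`-pattern (writing `•T = •t₁ ∪ ⋯ ∪ •tₙ` and `T• = t₁• ∪ ⋯ ∪ tₙ•`). -/
def ParPattern (N : LPNet P T A) (n : ℕ) (t : ℕ → T) : Prop :=
  2 ≤ n ∧ (∀ i < n, t i ∈ N.trans) ∧
  (∀ i < n, ∀ j < n, t i = t j → i = j) ∧
  -- (1) pre-sets pairwise disjoint
  (∀ i < n, ∀ j < n, i ≠ j → preT N (t i) ∩ preT N (t j) = ∅) ∧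
  -- (2) post-sets pairwise disjoint
  (∀ i < n, ∀ j < n, i ≠ j → postT N (t i) ∩ postT N (t j) = ∅) ∧
  -- (3) every `p ∈ •tᵢ` satisfies `p• = {tᵢ}`
  (∀ i < n, ∀ p ∈ preT N (t i), postP N p = {t i}) ∧
  -- (4) every `p ∈ tᵢ•` satisfies `•p = {tᵢ}`
  (∀ i < n, ∀ p ∈ postT N (t i), preP N p = {t i}) ∧
  -- (5) every `p ∈ •T` satisfies `•p ∩ T = ∅`
  (∀ p ∈ {p | ∃ i < n, p ∈ preT N (t i)},
    preP N p ∩ {u | ∃ i < n, u = t i} = ∅) ∧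
  -- (6) all `p, p' ∈ •T` satisfy `•p = •p'`
  (∀ p ∈ {p | ∃ i < n, p ∈ preT N (t i)},
    ∀ p' ∈ {p | ∃ i < n, p ∈ preT N (t i)}, preP N p = preP N p') ∧
  -- (7) every `p ∈ T•` satisfies `p• ∩ T = ∅`
  (∀ p ∈ {p | ∃ i < n, p ∈ postT N (t i)},
    postP N p ∩ {u | ∃ i < n, u = t i} = ∅) ∧
  -- (8) all `p, p' ∈ T•` satisfy `p• = p'•`
  (∀ p ∈ {p | ∃ i < n, p ∈ postT N (t i)},
    ∀ p' ∈ {p | ∃ i < n, p ∈ postT N (t i)}, postP N p = postP N p') ∧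
  -- (9) all `u, u' ∈ •(•T)` satisfy `•u = •u'`
  (∀ u u' : T, (∃ p ∈ {p | ∃ i < n, p ∈ preT N (t i)}, u ∈ preP N p) →
    (∃ p ∈ {p | ∃ i < n, p ∈ preT N (t i)}, u' ∈ preP N p) →
    preT N u = preT N u') ∧
  -- (10) all `u, u' ∈ (T•)•` satisfy `u• = u'•`
  (∀ u u' : T, (∃ p ∈ {p | ∃ i < n, p ∈ postT N (t i)}, u ∈ postP N p) →
    (∃ p ∈ {p | ∃ i < n, p ∈ postT N (t i)}, u' ∈ postP N p) →
    postT N u = postT N u')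

/-- `N'` is the `∧`-reduced net of `N`: the transitions `t₁,...,tₙ` are
replaced by a fresh transition `t'` with pre-set `•T` and post-set `T•`,
labelled `∧(ℓ(t₁),...,ℓ(tₙ))`. -/
def ParReduced (N N' : LPNet P T A) (n : ℕ) (t : ℕ → T) (t' : T) : Prop :=
  t' ∉ N.trans ∧
  N'.places = N.places ∧
  N'.trans = (N.trans \ {u | ∃ i < n, u = t i}) ∪ {t'} ∧
  N'.pt = {a ∈ N.pt | ¬ ∃ i < n, a.2 = t i} ∪
    {a : P × T | (∃ i < n, a.1 ∈ preT N (t i)) ∧ a.2 = t'} ∧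
  N'.tp = {a ∈ N.tp | ¬ ∃ i < n, a.1 = t i} ∪
    {a : T × P | a.1 = t' ∧ ∃ i < n, a.2 ∈ postT N (t i)} ∧
  N'.label = fun u =>
    if u = t' then PTree.par (n - 1) (fun i => N.label (t i.val)) else N.label u


/-! ### Auxiliary development for the ∧-pattern reduction -/

namespace ParRedAux

variable {P T A : Type}

lemma indicator_one_apply (s : Set P) (p : P) :
    s.indicator (1 : P → ℕ) p = if p ∈ s then 1 else 0 := by
  classical
  by_cases h : p ∈ s <;> simp [h]

lemma fire_apply (N : LPNet P T A) (u : T) (M : P → ℕ) (p : P) :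
    fire N u M p
      = M p - (if p ∈ preT N u then 1 else 0) + (if p ∈ postT N u then 1 else 0) := by
  simp [fire, indicator_one_apply]

lemma mark_singleton_apply (q p : P) : mark {q} p = if p = q then 1 else 0 := by
  classical
  by_cases h : p = q <;> simp [mark, h]

lemma fseq_append {N : LPNet P T A} {M M' M'' : P → ℕ} {σ σ' : List T}
    (h : FSeq N M σ M') (h' : FSeq N M' σ' M'') : FSeq N M (σ ++ σ') M'' := by
  induction h with
  | nil M => exact h'
  | cons M u σ M' hEn _ ih => exact FSeq.cons _ _ _ _ hEn (ih h')

lemma Reach.refl_ (N : LPNet P T A) (M : P → ℕ) : Reach N M M := ⟨[], FSeq.nil M⟩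

lemma Reach.trans_ {N : LPNet P T A} {M M' M'' : P → ℕ}
    (h : Reach N M M') (h' : Reach N M' M'') : Reach N M M'' := by
  obtain ⟨σ, hσ⟩ := h; obtain ⟨σ', hσ'⟩ := h'
  exact ⟨σ ++ σ', fseq_append hσ hσ'⟩

lemma Reach.head_ {N : LPNet P T A} {M M' : P → ℕ} {u : T}
    (hEn : Enabled N M u) (h : Reach N (fire N u M) M') : Reach N M M' := by
  obtain ⟨σ, hσ⟩ := h; exact ⟨u :: σ, FSeq.cons _ _ _ _ hEn hσ⟩

/-- All the structural consequences of the pattern / reduction / WF-ness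
that the simulation arguments need. -/
structure Ctx (P T A : Type) where
  N : LPNet P T A
  N' : LPNet P T A
  pi : P
  po : P
  n : ℕ
  t : ℕ → T
  t' : T
  hn : 2 ≤ n
  htr : ∀ i < n, t i ∈ N.trans
  ht' : t' ∉ N.trans
  ptWf : ∀ a ∈ N.pt, a.2 ∈ N.trans
  tpWf : ∀ a ∈ N.tp, a.1 ∈ N.trans
  preNe : ∀ i < n, ∃ p, p ∈ preT N (t i)
  postNe : ∀ i < n, ∃ q, q ∈ postT N (t i)
  preDisj : ∀ i < n, ∀ j < n, i ≠ j → ∀ p, p ∈ preT N (t i) → p ∈ preT N (t j) → False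
  postDisj : ∀ i < n, ∀ j < n, i ≠ j → ∀ q, q ∈ postT N (t i) → q ∈ postT N (t j) → False
  prePost : ∀ p, (∃ i < n, p ∈ preT N (t i)) → (∃ j < n, p ∈ postT N (t j)) → False
  piPre : ¬ ∃ i < n, pi ∈ preT N (t i)
  piPost : ¬ ∃ i < n, pi ∈ postT N (t i)
  poPre : ¬ ∃ i < n, po ∈ preT N (t i)
  poPost : ¬ ∃ i < n, po ∈ postT N (t i)
  preOnly : ∀ i < n, ∀ p ∈ preT N (t i), ∀ u, (p, u) ∈ N.pt → u = t i
  postOnly : ∀ i < n, ∀ q ∈ postT N (t i), ∀ u, (u, q) ∈ N.tp → u = t i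
  prodAll : ∀ u p p', (∃ i < n, p ∈ preT N (t i)) → (∃ i < n, p' ∈ preT N (t i)) →
      (u, p) ∈ N.tp → (u, p') ∈ N.tp
  consAll : ∀ u q q', (∃ i < n, q ∈ postT N (t i)) → (∃ i < n, q' ∈ postT N (t i)) →
      (q, u) ∈ N.pt → (q', u) ∈ N.pt
  patNotProd : ∀ j < n, ∀ p, (∃ i < n, p ∈ preT N (t i)) → (t j, p) ∉ N.tp
  patNotCons : ∀ j < n, ∀ q, (∃ i < n, q ∈ postT N (t i)) → (q, t j) ∉ N.pt
  htrans' : N'.trans = (N.trans \ {u | ∃ i < n, u = t i}) ∪ {t'}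
  hpt' : N'.pt = {a ∈ N.pt | ¬ ∃ i < n, a.2 = t i} ∪
    {a : P × T | (∃ i < n, a.1 ∈ preT N (t i)) ∧ a.2 = t'}
  htp' : N'.tp = {a ∈ N.tp | ¬ ∃ i < n, a.1 = t i} ∪
    {a : T × P | a.1 = t' ∧ ∃ i < n, a.2 ∈ postT N (t i)}

namespace Ctx

variable (C : Ctx P T A)

/-- `•T`. -/
def Pre : Set P := {p | ∃ i < C.n, p ∈ preT C.N (C.t i)}

/-- `T•`. -/
def Post : Set P := {p | ∃ i < C.n, p ∈ postT C.N (C.t i)}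

lemma mem_Pre {p : P} : p ∈ C.Pre ↔ ∃ i < C.n, p ∈ preT C.N (C.t i) := Iff.rfl
lemma mem_Post {q : P} : q ∈ C.Post ↔ ∃ i < C.n, q ∈ postT C.N (C.t i) := Iff.rfl

lemma t_ne_t' {i : ℕ} (hi : i < C.n) : C.t i ≠ C.t' := fun h => C.ht' (h ▸ C.htr i hi)

lemma t'_mem_trans' : C.t' ∈ C.N'.trans := by
  rw [C.htrans']; exact Or.inr rfl

lemma mem_trans'_of {u : T} (hu : u ∈ C.N.trans) (hnp : ¬ ∃ i < C.n, u = C.t i) :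
    u ∈ C.N'.trans := by
  rw [C.htrans']; exact Or.inl ⟨hu, hnp⟩

lemma of_mem_trans' {u : T} (hu : u ∈ C.N'.trans) :
    u = C.t' ∨ (u ∈ C.N.trans ∧ ¬ ∃ i < C.n, u = C.t i) := by
  rw [C.htrans'] at hu
  rcases hu with h | h
  · exact Or.inr ⟨h.1, h.2⟩
  · exact Or.inl h

lemma preT'_eq {u : T} (hu : ¬ ∃ i < C.n, u = C.t i) (hu' : u ≠ C.t') :
    preT C.N' u = preT C.N u := by
  ext p
  simp only [preT, Set.mem_setOf_eq, C.hpt', Set.mem_union, Set.mem_setOf_eq]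
  constructor
  · rintro (⟨h, _⟩ | ⟨_, h⟩)
    · exact h
    · exact absurd h hu'
  · intro h; exact Or.inl ⟨h, hu⟩

lemma postT'_eq {u : T} (hu : ¬ ∃ i < C.n, u = C.t i) (hu' : u ≠ C.t') :
    postT C.N' u = postT C.N u := by
  ext p
  simp only [postT, Set.mem_setOf_eq, C.htp', Set.mem_union, Set.mem_setOf_eq]
  constructor
  · rintro (⟨h, _⟩ | ⟨h, _⟩)
    · exact h
    · exact absurd h hu'
  · intro h; exact Or.inl ⟨h, hu⟩

lemma preT'_t' : preT C.N' C.t' = C.Pre := by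
  ext p
  simp only [preT, Set.mem_setOf_eq, C.hpt', Set.mem_union, Set.mem_setOf_eq, Pre]
  constructor
  · rintro (⟨h, _⟩ | ⟨h, _⟩)
    · exact absurd (C.ptWf _ h) C.ht'
    · exact h
  · intro h; exact Or.inr ⟨h, trivial⟩

lemma postT'_t' : postT C.N' C.t' = C.Post := by
  ext p
  simp only [postT, Set.mem_setOf_eq, C.htp', Set.mem_union, Set.mem_setOf_eq, Post]
  constructor
  · rintro (⟨h, _⟩ | ⟨_, h⟩)
    · exact absurd (C.tpWf _ h) C.ht'
    · exact h
  · intro h; exact Or.inr ⟨trivial, h⟩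

end Ctx

end ParRedAux

namespace ParRedAux

namespace Ctx

variable {P T A : Type} (C : Ctx P T A)

/-- `u` produces tokens on `•T`. -/
def Produces (u : T) : Prop := ∃ p ∈ C.Pre, (u, p) ∈ C.N.tp

/-- `u` consumes tokens from `T•`. -/
def Consumes (u : T) : Prop := ∃ q ∈ C.Post, (q, u) ∈ C.N.pt

lemma produces_all {u : T} (h : C.Produces u) : ∀ p ∈ C.Pre, (u, p) ∈ C.N.tp := by
  obtain ⟨p₀, hp₀, harc⟩ := h
  exact fun p hp => C.prodAll u p₀ p hp₀ hp harc

lemma consumes_all {u : T} (h : C.Consumes u) : ∀ q ∈ C.Post, (q, u) ∈ C.N.pt := by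
  obtain ⟨q₀, hq₀, harc⟩ := h
  exact fun q hq => C.consAll u q₀ q hq₀ hq harc

lemma not_pt_of_Pre {p : P} {u : T} (hp : p ∈ C.Pre) (hnp : ¬ ∃ i < C.n, u = C.t i) :
    (p, u) ∉ C.N.pt := by
  intro h
  obtain ⟨i, hi, hpi⟩ := hp
  exact hnp ⟨i, hi, C.preOnly i hi p hpi u h⟩

lemma not_tp_of_Post {q : P} {u : T} (hq : q ∈ C.Post) (hnp : ¬ ∃ i < C.n, u = C.t i) :
    (u, q) ∉ C.N.tp := by
  intro h
  obtain ⟨i, hi, hqi⟩ := hq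
  exact hnp ⟨i, hi, C.postOnly i hi q hqi u h⟩

lemma not_Post_of_Pre {p : P} (hp : p ∈ C.Pre) : p ∉ C.Post := fun h => C.prePost p hp h

lemma fire'_eq {u : T} (hnp : ¬ ∃ i < C.n, u = C.t i) (hne : u ≠ C.t') (M : P → ℕ) :
    fire C.N' u M = fire C.N u M := by
  unfold fire
  rw [C.preT'_eq hnp hne, C.postT'_eq hnp hne]

/-- Firing a non-pattern producer on a pre-place. -/
lemma fire_Pre_prod {u : T} (hnp : ¬ ∃ i < C.n, u = C.t i) (hprod : C.Produces u)
    {p : P} (hp : p ∈ C.Pre) (M : P → ℕ) : fire C.N u M p = M p + 1 := by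
  have h1 : p ∉ preT C.N u := C.not_pt_of_Pre hp hnp
  have h2 : p ∈ postT C.N u := C.produces_all hprod p hp
  rw [fire_apply, if_neg h1, if_pos h2]
  omega

lemma fire_Pre_noprod {u : T} (hnp : ¬ ∃ i < C.n, u = C.t i) (hprod : ¬ C.Produces u)
    {p : P} (hp : p ∈ C.Pre) (M : P → ℕ) : fire C.N u M p = M p := by
  have h1 : p ∉ preT C.N u := C.not_pt_of_Pre hp hnp
  have h2 : p ∉ postT C.N u := fun h => hprod ⟨p, hp, h⟩
  rw [fire_apply, if_neg h1, if_neg h2]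
  omega

lemma fire_Post_cons {u : T} (hnp : ¬ ∃ i < C.n, u = C.t i) (hcons : C.Consumes u)
    {q : P} (hq : q ∈ C.Post) (M : P → ℕ) : fire C.N u M q = M q - 1 := by
  have h1 : q ∈ preT C.N u := C.consumes_all hcons q hq
  have h2 : q ∉ postT C.N u := C.not_tp_of_Post hq hnp
  rw [fire_apply, if_pos h1, if_neg h2]
  omega

lemma fire_Post_nocons {u : T} (hnp : ¬ ∃ i < C.n, u = C.t i) (hcons : ¬ C.Consumes u)
    {q : P} (hq : q ∈ C.Post) (M : P → ℕ) : fire C.N u M q = M q := by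
  have h1 : q ∉ preT C.N u := fun h => hcons ⟨q, hq, h⟩
  have h2 : q ∉ postT C.N u := C.not_tp_of_Post hq hnp
  rw [fire_apply, if_neg h1, if_neg h2]
  omega

/-- Firing `t'` in the reduced net. -/
lemma fire_t'_Pre {p : P} (hp : p ∈ C.Pre) (M : P → ℕ) :
    fire C.N' C.t' M p = M p - 1 := by
  have h1 : p ∈ preT C.N' C.t' := by rw [C.preT'_t']; exact hp
  have h2 : p ∉ postT C.N' C.t' := by rw [C.postT'_t']; exact C.not_Post_of_Pre hp
  rw [fire_apply, if_pos h1, if_neg h2]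
  omega

lemma fire_t'_Post {q : P} (hq : q ∈ C.Post) (M : P → ℕ) :
    fire C.N' C.t' M q = M q + 1 := by
  have h1 : q ∉ preT C.N' C.t' := by
    rw [C.preT'_t']; exact fun h => C.prePost q h hq
  have h2 : q ∈ postT C.N' C.t' := by rw [C.postT'_t']; exact hq
  rw [fire_apply, if_neg h1, if_pos h2]
  omega

lemma fire_t'_off {p : P} (hp : p ∉ C.Pre) (hq : p ∉ C.Post) (M : P → ℕ) :
    fire C.N' C.t' M p = M p := by
  have h1 : p ∉ preT C.N' C.t' := by rw [C.preT'_t']; exact hp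
  have h2 : p ∉ postT C.N' C.t' := by rw [C.postT'_t']; exact hq
  rw [fire_apply, if_neg h1, if_neg h2]
  omega

/-- Firing a pattern transition `t i` in `N`. -/
lemma fire_ti_pre {i : ℕ} (hi : i < C.n) {p : P} (hp : p ∈ preT C.N (C.t i)) (M : P → ℕ) :
    fire C.N (C.t i) M p = M p - 1 := by
  have h2 : p ∉ postT C.N (C.t i) := fun h => C.prePost p ⟨i, hi, hp⟩ ⟨i, hi, h⟩
  rw [fire_apply, if_pos hp, if_neg h2]
  omega

lemma fire_ti_post {i : ℕ} (hi : i < C.n) {q : P} (hq : q ∈ postT C.N (C.t i)) (M : P → ℕ) :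
    fire C.N (C.t i) M q = M q + 1 := by
  have h1 : q ∉ preT C.N (C.t i) := fun h => C.prePost q ⟨i, hi, h⟩ ⟨i, hi, hq⟩
  rw [fire_apply, if_neg h1, if_pos hq]
  omega

lemma fire_ti_off {i : ℕ} {p : P} (hp : p ∉ preT C.N (C.t i))
    (hq : p ∉ postT C.N (C.t i)) (M : P → ℕ) :
    fire C.N (C.t i) M p = M p := by
  rw [fire_apply, if_neg hp, if_neg hq]
  omega

/-- Firing any transition leaves places outside its pre- and post-set unchanged. -/
lemma fire_off (N₀ : LPNet P T A) {u : T} {p : P} (hp : p ∉ preT N₀ u)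
    (hq : p ∉ postT N₀ u) (M : P → ℕ) : fire N₀ u M p = M p := by
  rw [fire_apply, if_neg hp, if_neg hq]
  omega

end Ctx

lemma fire_congr_pt (N₀ : LPNet P T A) (u : T) {X Y : P → ℕ} {p : P} (h : X p = Y p) :
    fire N₀ u X p = fire N₀ u Y p := by
  rw [fire_apply, fire_apply, h]

end ParRedAux

namespace ParRedAux

variable {P T A : Type}

/-- Firing `u` exactly `k` times from a marking with `k` tokens on each
pre-place and `s` on each post-place. -/
lemma fseq_repeat (N₀ : LPNet P T A) {u : T} (hu : u ∈ N₀.trans)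
    (hdisj : ∀ p, p ∈ preT N₀ u → p ∈ postT N₀ u → False) :
    ∀ (k s : ℕ) (M : P → ℕ), (∀ p ∈ preT N₀ u, M p = k) → (∀ q ∈ postT N₀ u, M q = s) →
    FSeq N₀ M (List.replicate k u)
      (fun p => if p ∈ preT N₀ u then 0 else if p ∈ postT N₀ u then s + k else M p) := by
  intro k
  induction k with
  | zero =>
    intro s M hM hM'
    have hF : (fun p => if p ∈ preT N₀ u then 0
        else if p ∈ postT N₀ u then s + 0 else M p) = M := by
      funext p
      by_cases h1 : p ∈ preT N₀ u
      · rw [if_pos h1, hM p h1]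
      · rw [if_neg h1]
        by_cases h2 : p ∈ postT N₀ u
        · rw [if_pos h2, hM' p h2]
          omega
        · rw [if_neg h2]
    rw [hF]
    exact FSeq.nil M
  | succ k ih =>
    intro s M hM hM'
    rw [List.replicate_succ]
    refine FSeq.cons _ _ _ _ ⟨hu, fun p hp => by rw [hM p hp]; omega⟩ ?_
    have h1 : ∀ p ∈ preT N₀ u, fire N₀ u M p = k := by
      intro p hp
      rw [fire_apply, if_pos hp, if_neg (fun h => hdisj p hp h), hM p hp]
      omega
    have h2 : ∀ q ∈ postT N₀ u, fire N₀ u M q = s + 1 := by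
      intro q hq
      rw [fire_apply, if_neg (fun h => hdisj q h hq), if_pos hq, hM' q hq]
      omega
    have := ih (s + 1) (fire N₀ u M) h1 h2
    have hF : (fun p => if p ∈ preT N₀ u then 0
        else if p ∈ postT N₀ u then s + 1 + k else fire N₀ u M p)
        = (fun p => if p ∈ preT N₀ u then 0
        else if p ∈ postT N₀ u then s + (k + 1) else M p) := by
      funext p
      by_cases hp : p ∈ preT N₀ u
      · rw [if_pos hp, if_pos hp]
      · rw [if_neg hp, if_neg hp]
        by_cases hq : p ∈ postT N₀ u
        · rw [if_pos hq, if_pos hq]; omega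
        · rw [if_neg hq, if_neg hq, fire_apply, if_neg hp, if_neg hq]
          omega
    rw [hF] at this
    exact this

namespace Ctx

variable (C : Ctx P T A)

/-- The "eager" image of a marking: all `t'` firings done. -/
noncomputable def Estate (M : P → ℕ) (Aa b : ℕ) : P → ℕ := fun p =>
  if p ∈ C.Pre then 0 else if p ∈ C.Post then Aa - b else M p

/-- The "lazy" image of a marking: all `t'` firings pending. -/
noncomputable def Lstate (M : P → ℕ) (Aa b : ℕ) : P → ℕ := fun p =>
  if p ∈ C.Pre then Aa - b else if p ∈ C.Post then 0 else M p

lemma Estate_Pre {M : P → ℕ} {Aa b : ℕ} {p : P} (hp : p ∈ C.Pre) :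
    C.Estate M Aa b p = 0 := if_pos hp

lemma Estate_Post {M : P → ℕ} {Aa b : ℕ} {q : P} (hq : q ∈ C.Post) :
    C.Estate M Aa b q = Aa - b := by
  unfold Estate
  rw [if_neg (show q ∉ C.Pre from fun h => C.prePost q h hq), if_pos hq]

lemma Estate_off {M : P → ℕ} {Aa b : ℕ} {p : P} (hp : p ∉ C.Pre) (hq : p ∉ C.Post) :
    C.Estate M Aa b p = M p := by
  unfold Estate
  rw [if_neg hp, if_neg hq]

lemma Lstate_Pre {M : P → ℕ} {Aa b : ℕ} {p : P} (hp : p ∈ C.Pre) :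
    C.Lstate M Aa b p = Aa - b := if_pos hp

lemma Lstate_Post {M : P → ℕ} {Aa b : ℕ} {q : P} (hq : q ∈ C.Post) :
    C.Lstate M Aa b q = 0 := by
  unfold Lstate
  rw [if_neg (show q ∉ C.Pre from fun h => C.prePost q h hq), if_pos hq]

lemma Lstate_off {M : P → ℕ} {Aa b : ℕ} {p : P} (hp : p ∉ C.Pre) (hq : p ∉ C.Post) :
    C.Lstate M Aa b p = M p := by
  unfold Lstate
  rw [if_neg hp, if_neg hq]

/-- Two states agreeing off the region have the same eager images. -/
lemma Estate_congr {M M' : P → ℕ} {Aa b : ℕ}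
    (h : ∀ p, p ∉ C.Pre → p ∉ C.Post → M p = M' p) :
    C.Estate M Aa b = C.Estate M' Aa b := by
  funext p
  by_cases hp : p ∈ C.Pre
  · rw [C.Estate_Pre hp, C.Estate_Pre hp]
  · by_cases hq : p ∈ C.Post
    · rw [C.Estate_Post hq, C.Estate_Post hq]
    · rw [C.Estate_off hp hq, C.Estate_off hp hq, h p hp hq]

lemma Lstate_congr {M M' : P → ℕ} {Aa b : ℕ}
    (h : ∀ p, p ∉ C.Pre → p ∉ C.Post → M p = M' p) :
    C.Lstate M Aa b = C.Lstate M' Aa b := by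
  funext p
  by_cases hp : p ∈ C.Pre
  · rw [C.Lstate_Pre hp, C.Lstate_Pre hp]
  · by_cases hq : p ∈ C.Post
    · rw [C.Lstate_Post hq, C.Lstate_Post hq]
    · rw [C.Lstate_off hp hq, C.Lstate_off hp hq, h p hp hq]

end Ctx

end ParRedAux

namespace ParRedAux

lemma exists_lt_succ_iff {m : ℕ} {Q : ℕ → Prop} (h : ¬ Q m) :
    (∃ i < m + 1, Q i) ↔ (∃ i < m, Q i) := by
  constructor
  · rintro ⟨i, hi, hq⟩
    rcases Nat.lt_succ_iff_lt_or_eq.mp hi with h' | h'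
    · exact ⟨i, h', hq⟩
    · exact absurd (h' ▸ hq) h
  · rintro ⟨i, hi, hq⟩
    exact ⟨i, Nat.lt_succ_of_lt hi, hq⟩

namespace Ctx

variable {P T A : Type} (C : Ctx P T A)

/-- Intermediate state: the first `m` pattern transitions completed. -/
noncomputable def Dstate (M : P → ℕ) (Aa b : ℕ) (m : ℕ) : P → ℕ := fun p =>
  if ∃ i < m, p ∈ preT C.N (C.t i) then 0
  else if ∃ i < m, p ∈ postT C.N (C.t i) then Aa - b else M p

lemma Dstate_zero (M : P → ℕ) (Aa b : ℕ) : C.Dstate M Aa b 0 = M := by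
  funext p
  unfold Dstate
  rw [if_neg, if_neg] <;> (rintro ⟨i, hi, -⟩; omega)

lemma Dstate_top (M : P → ℕ) (Aa b : ℕ) : C.Dstate M Aa b C.n = C.Estate M Aa b := by
  funext p
  unfold Dstate
  by_cases hp : ∃ i < C.n, p ∈ preT C.N (C.t i)
  · rw [if_pos hp, C.Estate_Pre hp]
  · rw [if_neg hp]
    by_cases hq : ∃ i < C.n, p ∈ postT C.N (C.t i)
    · rw [if_pos hq, C.Estate_Post hq]
    · rw [if_neg hq, C.Estate_off hp hq]

lemma Dstate_succ_off {M : P → ℕ} {Aa b m : ℕ} {p : P}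
    (h1 : p ∉ preT C.N (C.t m)) (h2 : p ∉ postT C.N (C.t m)) :
    C.Dstate M Aa b (m + 1) p = C.Dstate M Aa b m p := by
  unfold Dstate
  by_cases he1 : ∃ i < m, p ∈ preT C.N (C.t i)
  · rw [if_pos ((exists_lt_succ_iff h1).mpr he1), if_pos he1]
  · rw [if_neg (fun h => he1 ((exists_lt_succ_iff h1).mp h)), if_neg he1]
    by_cases he2 : ∃ i < m, p ∈ postT C.N (C.t i)
    · rw [if_pos ((exists_lt_succ_iff h2).mpr he2), if_pos he2]
    · rw [if_neg (fun h => he2 ((exists_lt_succ_iff h2).mp h)), if_neg he2]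

/-- Completing all the pending pattern transitions in `N`. -/
lemma comp_reach (M : P → ℕ) (Aa b : ℕ) (c : ℕ → ℕ)
    (hbc : ∀ i < C.n, b ≤ c i) (hcA : ∀ i < C.n, c i ≤ Aa)
    (hpre : ∀ i < C.n, ∀ p ∈ preT C.N (C.t i), M p = Aa - c i)
    (hpost : ∀ i < C.n, ∀ q ∈ postT C.N (C.t i), M q = c i - b) :
    Reach C.N M (C.Estate M Aa b) := by
  have key : ∀ m, m ≤ C.n → Reach C.N M (C.Dstate M Aa b m) := by
    intro m
    induction m with
    | zero => intro _; rw [C.Dstate_zero]; exact Reach.refl_ _ _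
    | succ m ih =>
      intro hm
      have hm' : m < C.n := hm
      refine Reach.trans_ (ih (le_of_lt hm')) ?_
      have hdisj : ∀ p, p ∈ preT C.N (C.t m) → p ∈ postT C.N (C.t m) → False :=
        fun p h1 h2 => C.prePost p ⟨m, hm', h1⟩ ⟨m, hm', h2⟩
      have hpre' : ∀ p ∈ preT C.N (C.t m), C.Dstate M Aa b m p = Aa - c m := by
        intro p hp
        unfold Dstate
        rw [if_neg, if_neg]
        · exact hpre m hm' p hp
        · rintro ⟨i, hi, hqi⟩
          exact C.prePost p ⟨m, hm', hp⟩ ⟨i, lt_trans hi hm', hqi⟩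
        · rintro ⟨i, hi, hpi⟩
          exact C.preDisj i (lt_trans hi hm') m hm' (Nat.ne_of_lt hi) p hpi hp
      have hpost' : ∀ q ∈ postT C.N (C.t m), C.Dstate M Aa b m q = c m - b := by
        intro q hq
        unfold Dstate
        rw [if_neg, if_neg]
        · exact hpost m hm' q hq
        · rintro ⟨i, hi, hqi⟩
          exact C.postDisj i (lt_trans hi hm') m hm' (Nat.ne_of_lt hi) q hqi hq
        · rintro ⟨i, hi, hpi⟩
          exact C.prePost q ⟨i, lt_trans hi hm', hpi⟩ ⟨m, hm', hq⟩
      have hrun := fseq_repeat C.N (C.htr m hm') hdisj (Aa - c m) (c m - b)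
        (C.Dstate M Aa b m) hpre' hpost'
      have hF : (fun p => if p ∈ preT C.N (C.t m) then 0
          else if p ∈ postT C.N (C.t m) then c m - b + (Aa - c m)
          else C.Dstate M Aa b m p) = C.Dstate M Aa b (m + 1) := by
        funext p
        by_cases h1 : p ∈ preT C.N (C.t m)
        · have w : ∃ i < m + 1, p ∈ preT C.N (C.t i) := ⟨m, Nat.lt_succ_self m, h1⟩
          rw [if_pos h1]
          unfold Dstate
          rw [if_pos w]
        · rw [if_neg h1]
          by_cases h2 : p ∈ postT C.N (C.t m)
          · have wn : ¬ ∃ i < m + 1, p ∈ preT C.N (C.t i) := by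
              rintro ⟨i, hi, hpi⟩
              exact C.prePost p ⟨i, Nat.lt_of_lt_of_le hi hm, hpi⟩ ⟨m, hm', h2⟩
            have w : ∃ i < m + 1, p ∈ postT C.N (C.t i) := ⟨m, Nat.lt_succ_self m, h2⟩
            rw [if_pos h2]
            unfold Dstate
            rw [if_neg wn, if_pos w]
            have := hbc m hm'
            have := hcA m hm'
            omega
          · rw [if_neg h2, C.Dstate_succ_off h1 h2]
      rw [hF] at hrun
      exact Reach.trans_ ⟨_, hrun⟩ (Reach.refl_ _ _)
  have h := key C.n le_rfl
  rw [C.Dstate_top] at h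
  exact h

/-- Repeatedly firing `t'` in `N'` from a synchronized marking reaches
the eager state. -/
lemma t'_repeat_reach {M : P → ℕ} {x y : ℕ}
    (hx : ∀ p ∈ C.Pre, M p = x) (hy : ∀ q ∈ C.Post, M q = y) :
    Reach C.N' M (C.Estate M (x + y) 0) := by
  have hdisj : ∀ p, p ∈ preT C.N' C.t' → p ∈ postT C.N' C.t' → False := by
    intro p h1 h2
    rw [C.preT'_t'] at h1
    rw [C.postT'_t'] at h2
    exact C.prePost p h1 h2
  have hx' : ∀ p ∈ preT C.N' C.t', M p = x := by
    intro p hp; rw [C.preT'_t'] at hp; exact hx p hp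
  have hy' : ∀ q ∈ postT C.N' C.t', M q = y := by
    intro q hq; rw [C.postT'_t'] at hq; exact hy q hq
  have hrun := fseq_repeat C.N' C.t'_mem_trans' hdisj x y M hx' hy'
  have hF : (fun p => if p ∈ preT C.N' C.t' then 0
      else if p ∈ postT C.N' C.t' then y + x else M p) = C.Estate M (x + y) 0 := by
    funext p
    by_cases hp : p ∈ C.Pre
    · rw [if_pos (show p ∈ preT C.N' C.t' from (C.preT'_t').symm ▸ hp), C.Estate_Pre hp]
    · rw [if_neg (show p ∉ preT C.N' C.t' from fun h => hp ((C.preT'_t') ▸ h))]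
      by_cases hq : p ∈ C.Post
      · rw [if_pos (show p ∈ postT C.N' C.t' from (C.postT'_t').symm ▸ hq),
          C.Estate_Post hq]
        omega
      · rw [if_neg (show p ∉ postT C.N' C.t' from fun h => hq ((C.postT'_t') ▸ h)),
          C.Estate_off hp hq]
  rw [hF] at hrun
  exact ⟨_, hrun⟩

/-- Intermediate state for the expansion of one `t'` firing. -/
noncomputable def Bstate (M : P → ℕ) (m : ℕ) : P → ℕ := fun p =>
  if ∃ i < m, p ∈ preT C.N (C.t i) then M p - 1
  else if ∃ i < m, p ∈ postT C.N (C.t i) then M p + 1 else M p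

lemma Bstate_succ_off {M : P → ℕ} {m : ℕ} {p : P}
    (h1 : p ∉ preT C.N (C.t m)) (h2 : p ∉ postT C.N (C.t m)) :
    C.Bstate M (m + 1) p = C.Bstate M m p := by
  unfold Bstate
  by_cases he1 : ∃ i < m, p ∈ preT C.N (C.t i)
  · rw [if_pos ((exists_lt_succ_iff h1).mpr he1), if_pos he1]
  · rw [if_neg (fun h => he1 ((exists_lt_succ_iff h1).mp h)), if_neg he1]
    by_cases he2 : ∃ i < m, p ∈ postT C.N (C.t i)
    · rw [if_pos ((exists_lt_succ_iff h2).mpr he2), if_pos he2]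
    · rw [if_neg (fun h => he2 ((exists_lt_succ_iff h2).mp h)), if_neg he2]

/-- A firing of `t'` in `N'` can be expanded into the block `t 0, …, t (n-1)` in `N`. -/
lemma t'_expand (M : P → ℕ) (hM : ∀ p ∈ C.Pre, 0 < M p) :
    ∃ σ, FSeq C.N M σ (fire C.N' C.t' M) := by
  have key : ∀ m, m ≤ C.n → ∃ σ, FSeq C.N M σ (C.Bstate M m) := by
    intro m
    induction m with
    | zero =>
      intro _
      refine ⟨[], ?_⟩
      have hB : C.Bstate M 0 = M := by
        funext p
        unfold Bstate
        rw [if_neg, if_neg] <;> (rintro ⟨i, hi, -⟩; omega)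
      rw [hB]
      exact FSeq.nil M
    | succ m ih =>
      intro hm
      have hm' : m < C.n := hm
      obtain ⟨σ, hσ⟩ := ih (le_of_lt hm')
      have hBm : ∀ p ∈ preT C.N (C.t m), C.Bstate M m p = M p := by
        intro p hp
        unfold Bstate
        rw [if_neg, if_neg]
        · rintro ⟨i, hi, hqi⟩
          exact C.prePost p ⟨m, hm', hp⟩ ⟨i, lt_trans hi hm', hqi⟩
        · rintro ⟨i, hi, hpi⟩
          exact C.preDisj i (lt_trans hi hm') m hm' (Nat.ne_of_lt hi) p hpi hp
      have hBm' : ∀ q ∈ postT C.N (C.t m), C.Bstate M m q = M q := by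
        intro q hq
        unfold Bstate
        rw [if_neg, if_neg]
        · rintro ⟨i, hi, hqi⟩
          exact C.postDisj i (lt_trans hi hm') m hm' (Nat.ne_of_lt hi) q hqi hq
        · rintro ⟨i, hi, hpi⟩
          exact C.prePost q ⟨i, lt_trans hi hm', hpi⟩ ⟨m, hm', hq⟩
      refine ⟨σ ++ [C.t m], fseq_append hσ ?_⟩
      refine FSeq.cons _ _ _ _ ⟨C.htr m hm', ?_⟩ ?_
      · intro p hp
        rw [hBm p hp]
        exact hM p ⟨m, hm', hp⟩
      · have hB : fire C.N (C.t m) (C.Bstate M m) = C.Bstate M (m + 1) := by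
          funext p
          by_cases h1 : p ∈ preT C.N (C.t m)
          · have w : ∃ i < m + 1, p ∈ preT C.N (C.t i) := ⟨m, Nat.lt_succ_self m, h1⟩
            rw [C.fire_ti_pre hm' h1, hBm p h1]
            unfold Bstate
            rw [if_pos w]
          · by_cases h2 : p ∈ postT C.N (C.t m)
            · have wn : ¬ ∃ i < m + 1, p ∈ preT C.N (C.t i) := by
                rintro ⟨i, hi, hpi⟩
                exact C.prePost p ⟨i, Nat.lt_of_lt_of_le hi hm, hpi⟩ ⟨m, hm', h2⟩
              have w : ∃ i < m + 1, p ∈ postT C.N (C.t i) := ⟨m, Nat.lt_succ_self m, h2⟩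
              rw [C.fire_ti_post hm' h2, hBm' p h2]
              unfold Bstate
              rw [if_neg wn, if_pos w]
            · rw [C.fire_ti_off h1 h2, C.Bstate_succ_off h1 h2]
        rw [hB]
        exact FSeq.nil _
  obtain ⟨σ, hσ⟩ := key C.n le_rfl
  have hB : C.Bstate M C.n = fire C.N' C.t' M := by
    funext p
    unfold Bstate
    by_cases hp : ∃ i < C.n, p ∈ preT C.N (C.t i)
    · rw [if_pos hp, C.fire_t'_Pre hp]
    · rw [if_neg hp]
      by_cases hq : ∃ i < C.n, p ∈ postT C.N (C.t i)
      · rw [if_pos hq, C.fire_t'_Post hq]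
      · rw [if_neg hq, C.fire_t'_off hp hq]
  rw [hB] at hσ
  exact ⟨σ, hσ⟩

/-- Every run of the reduced net is a run of the original net. -/
lemma run_transfer : ∀ {M σ Me}, FSeq C.N' M σ Me → ∃ σ', FSeq C.N M σ' Me := by
  intro M σ Me h
  induction h with
  | nil M => exact ⟨[], FSeq.nil M⟩
  | cons M u σ Me hEn hFS ih =>
    obtain ⟨σ', hσ'⟩ := ih
    rcases C.of_mem_trans' hEn.1 with rfl | ⟨hu, hnp⟩
    · obtain ⟨σ₀, hσ₀⟩ := C.t'_expand M (fun p hp =>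
        hEn.2 p (show p ∈ preT C.N' C.t' from (C.preT'_t').symm ▸ hp))
      exact ⟨σ₀ ++ σ', fseq_append hσ₀ hσ'⟩
    · have hne : u ≠ C.t' := fun h => C.ht' (h ▸ hu)
      have hE : Enabled C.N M u := ⟨hu, fun p hp =>
        hEn.2 p (show p ∈ preT C.N' u from (C.preT'_eq hnp hne).symm ▸ hp)⟩
      rw [C.fire'_eq hnp hne] at hσ'
      exact ⟨u :: σ', FSeq.cons _ _ _ _ hE hσ'⟩

/-- Along any `N'`-run the region stays synchronized. -/
lemma sync : ∀ {M σ Me}, FSeq C.N' M σ Me →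
    ∀ x y, (∀ p ∈ C.Pre, M p = x) → (∀ q ∈ C.Post, M q = y) →
    ∃ x' y', (∀ p ∈ C.Pre, Me p = x') ∧ (∀ q ∈ C.Post, Me q = y') := by
  intro M σ Me h
  induction h with
  | nil M => exact fun x y hx hy => ⟨x, y, hx, hy⟩
  | cons M u σ Me hEn hFS ih =>
    intro x y hx hy
    rcases C.of_mem_trans' hEn.1 with rfl | ⟨hu, hnp⟩
    · refine ih (x - 1) (y + 1) ?_ ?_
      · intro p hp; rw [C.fire_t'_Pre hp, hx p hp]
      · intro q hq; rw [C.fire_t'_Post hq, hy q hq]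
    · have hne : u ≠ C.t' := fun h => C.ht' (h ▸ hu)
      by_cases hprod : C.Produces u
      · by_cases hcons : C.Consumes u
        · refine ih (x + 1) (y - 1) ?_ ?_
          · intro p hp
            rw [C.fire'_eq hnp hne, C.fire_Pre_prod hnp hprod hp, hx p hp]
          · intro q hq
            rw [C.fire'_eq hnp hne, C.fire_Post_cons hnp hcons hq, hy q hq]
        · refine ih (x + 1) y ?_ ?_
          · intro p hp
            rw [C.fire'_eq hnp hne, C.fire_Pre_prod hnp hprod hp, hx p hp]
          · intro q hq
            rw [C.fire'_eq hnp hne, C.fire_Post_nocons hnp hcons hq, hy q hq]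
      · by_cases hcons : C.Consumes u
        · refine ih x (y - 1) ?_ ?_
          · intro p hp
            rw [C.fire'_eq hnp hne, C.fire_Pre_noprod hnp hprod hp, hx p hp]
          · intro q hq
            rw [C.fire'_eq hnp hne, C.fire_Post_cons hnp hcons hq, hy q hq]
        · refine ih x y ?_ ?_
          · intro p hp
            rw [C.fire'_eq hnp hne, C.fire_Pre_noprod hnp hprod hp, hx p hp]
          · intro q hq
            rw [C.fire'_eq hnp hne, C.fire_Post_nocons hnp hcons hq, hy q hq]

end Ctx

end ParRedAux

namespace ParRedAux

namespace Ctx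

variable {P T A : Type} (C : Ctx P T A)

lemma enabled_Estate {u : T} (hnp : ¬ ∃ i < C.n, u = C.t i) {M : P → ℕ} {Aa b : ℕ}
    (hEn : Enabled C.N M u) (hAb : C.Consumes u → 0 < Aa - b) :
    Enabled C.N' (C.Estate M Aa b) u := by
  have hne : u ≠ C.t' := fun h => C.ht' (h ▸ hEn.1)
  refine ⟨C.mem_trans'_of hEn.1 hnp, ?_⟩
  intro p hp
  rw [C.preT'_eq hnp hne] at hp
  by_cases hPre : p ∈ C.Pre
  · exact absurd hp (C.not_pt_of_Pre hPre hnp)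
  · by_cases hPost : p ∈ C.Post
    · rw [C.Estate_Post hPost]
      exact hAb ⟨p, hPost, hp⟩
    · rw [C.Estate_off hPre hPost]
      exact hEn.2 p hp

lemma enabled_Lstate_nocons {u : T} (hnp : ¬ ∃ i < C.n, u = C.t i) {M : P → ℕ} {Aa b : ℕ}
    (hEn : Enabled C.N M u) (hcons : ¬ C.Consumes u) :
    Enabled C.N' (C.Lstate M Aa b) u := by
  have hne : u ≠ C.t' := fun h => C.ht' (h ▸ hEn.1)
  refine ⟨C.mem_trans'_of hEn.1 hnp, ?_⟩
  intro p hp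
  rw [C.preT'_eq hnp hne] at hp
  by_cases hPre : p ∈ C.Pre
  · exact absurd hp (C.not_pt_of_Pre hPre hnp)
  · by_cases hPost : p ∈ C.Post
    · exact absurd ⟨p, hPost, hp⟩ hcons
    · rw [C.Lstate_off hPre hPost]
      exact hEn.2 p hp

/-- One non-pattern step of `N`, simulated in `N'` both eagerly and lazily. -/
lemma step_sim {u : T} (hnp : ¬ ∃ i < C.n, u = C.t i) {M : P → ℕ} {Aa b : ℕ} {c : ℕ → ℕ}
    (hEn : Enabled C.N M u)
    (hbc : ∀ i < C.n, b ≤ c i) (hcA : ∀ i < C.n, c i ≤ Aa)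
    (hpre : ∀ i < C.n, ∀ p ∈ preT C.N (C.t i), M p = Aa - c i)
    (hpost : ∀ i < C.n, ∀ q ∈ postT C.N (C.t i), M q = c i - b) :
    ∃ Aa₂ b₂, Aa ≤ Aa₂ ∧
      (∀ i < C.n, b₂ ≤ c i) ∧ (∀ i < C.n, c i ≤ Aa₂) ∧
      (∀ i < C.n, ∀ p ∈ preT C.N (C.t i), fire C.N u M p = Aa₂ - c i) ∧
      (∀ i < C.n, ∀ q ∈ postT C.N (C.t i), fire C.N u M q = c i - b₂) ∧
      Reach C.N' (C.Estate M Aa b) (C.Estate (fire C.N u M) Aa₂ b₂) ∧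
      Reach C.N' (C.Lstate M Aa b) (C.Lstate (fire C.N u M) Aa₂ b₂) ∧
      (Aa < Aa₂ → ∃ Mw, Reach C.N' (C.Estate M Aa b) Mw ∧ Enabled C.N' Mw C.t') := by
  have hu : u ∈ C.N.trans := hEn.1
  have hne : u ≠ C.t' := fun h => C.ht' (h ▸ hu)
  have h0n : 0 < C.n := lt_of_lt_of_le (by norm_num) C.hn
  have hbAa : b ≤ Aa := le_trans (hbc 0 h0n) (hcA 0 h0n)
  by_cases hcons : C.Consumes u
  · have hbA : ∀ i < C.n, b + 1 ≤ c i := by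
      intro i hi
      obtain ⟨q, hq⟩ := C.postNe i hi
      have h1 : q ∈ preT C.N u := C.consumes_all hcons q ⟨i, hi, hq⟩
      have h2 := hEn.2 q h1
      have h3 := hpost i hi q hq
      have h4 := hbc i hi
      omega
    have hAb : 0 < Aa - b := by
      have h1 := hbA 0 h0n
      have h2 := hcA 0 h0n
      omega
    -- lazy prefix: fire t' then u (common to both consumer cases)
    have hEnT'L : Enabled C.N' (C.Lstate M Aa b) C.t' := by
      refine ⟨C.t'_mem_trans', ?_⟩
      intro p hp
      rw [C.preT'_t'] at hp
      rw [C.Lstate_Pre hp]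
      exact hAb
    have hEnUL : Enabled C.N' (fire C.N' C.t' (C.Lstate M Aa b)) u := by
      refine ⟨C.mem_trans'_of hu hnp, ?_⟩
      intro p hp
      rw [C.preT'_eq hnp hne] at hp
      by_cases hPre : p ∈ C.Pre
      · exact absurd hp (C.not_pt_of_Pre hPre hnp)
      · by_cases hPost : p ∈ C.Post
        · rw [C.fire_t'_Post hPost, C.Lstate_Post hPost]
          omega
        · rw [C.fire_t'_off hPre hPost, C.Lstate_off hPre hPost]
          exact hEn.2 p hp
    by_cases hprod : C.Produces u
    · -- producer and consumer
      refine ⟨Aa + 1, b + 1, by omega, hbA, fun i hi => by have := hcA i hi; omega,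
        ?_, ?_, ?_, ?_, ?_⟩
      · intro i hi p hp
        rw [C.fire_Pre_prod hnp hprod ⟨i, hi, hp⟩, hpre i hi p hp]
        have := hcA i hi
        omega
      · intro i hi q hq
        rw [C.fire_Post_cons hnp hcons ⟨i, hi, hq⟩, hpost i hi q hq]
        have := hbA i hi
        omega
      · -- eager : fire u then t'
        have hEnU : Enabled C.N' (C.Estate M Aa b) u :=
          C.enabled_Estate hnp hEn (fun _ => hAb)
        have hEnT' : Enabled C.N' (fire C.N' u (C.Estate M Aa b)) C.t' := by
          refine ⟨C.t'_mem_trans', ?_⟩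
          intro p hp
          rw [C.preT'_t'] at hp
          rw [C.fire'_eq hnp hne, C.fire_Pre_prod hnp hprod hp]
          omega
        have hR : Reach C.N' (C.Estate M Aa b)
            (fire C.N' C.t' (fire C.N' u (C.Estate M Aa b))) :=
          Reach.head_ hEnU (Reach.head_ hEnT' (Reach.refl_ _ _))
        have hE2 : fire C.N' C.t' (fire C.N' u (C.Estate M Aa b))
            = C.Estate (fire C.N u M) (Aa + 1) (b + 1) := by
          funext p
          by_cases hPre : p ∈ C.Pre
          · rw [C.fire_t'_Pre hPre, C.fire'_eq hnp hne,
              C.fire_Pre_prod hnp hprod hPre, C.Estate_Pre hPre, C.Estate_Pre hPre]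
          · by_cases hPost : p ∈ C.Post
            · rw [C.fire_t'_Post hPost, C.fire'_eq hnp hne,
                C.fire_Post_cons hnp hcons hPost, C.Estate_Post hPost,
                C.Estate_Post hPost]
              omega
            · rw [C.fire_t'_off hPre hPost, C.fire'_eq hnp hne,
                C.Estate_off hPre hPost]
              exact fire_congr_pt C.N u (C.Estate_off hPre hPost)
        rw [hE2] at hR
        exact hR
      · -- lazy : fire t' then u
        have hR : Reach C.N' (C.Lstate M Aa b)
            (fire C.N' u (fire C.N' C.t' (C.Lstate M Aa b))) :=
          Reach.head_ hEnT'L (Reach.head_ hEnUL (Reach.refl_ _ _))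
        have hL2 : fire C.N' u (fire C.N' C.t' (C.Lstate M Aa b))
            = C.Lstate (fire C.N u M) (Aa + 1) (b + 1) := by
          funext p
          by_cases hPre : p ∈ C.Pre
          · rw [C.fire'_eq hnp hne, C.fire_Pre_prod hnp hprod hPre,
              C.fire_t'_Pre hPre, C.Lstate_Pre hPre, C.Lstate_Pre hPre]
            omega
          · by_cases hPost : p ∈ C.Post
            · rw [C.fire'_eq hnp hne, C.fire_Post_cons hnp hcons hPost,
                C.fire_t'_Post hPost, C.Lstate_Post hPost, C.Lstate_Post hPost]
            · rw [C.fire'_eq hnp hne, C.Lstate_off hPre hPost]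
              exact fire_congr_pt C.N u (by rw [C.fire_t'_off hPre hPost, C.Lstate_off hPre hPost])
        rw [hL2] at hR
        exact hR
      · intro _
        refine ⟨fire C.N' u (C.Estate M Aa b), Reach.head_
          (C.enabled_Estate hnp hEn (fun _ => hAb)) (Reach.refl_ _ _), ?_⟩
        refine ⟨C.t'_mem_trans', ?_⟩
        intro p hp
        rw [C.preT'_t'] at hp
        rw [C.fire'_eq hnp hne, C.fire_Pre_prod hnp hprod hp]
        omega
    · -- consumer only
      refine ⟨Aa, b + 1, le_rfl, hbA, hcA, ?_, ?_, ?_, ?_,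
        fun h => absurd h (lt_irrefl _)⟩
      · intro i hi p hp
        rw [C.fire_Pre_noprod hnp hprod ⟨i, hi, hp⟩, hpre i hi p hp]
      · intro i hi q hq
        rw [C.fire_Post_cons hnp hcons ⟨i, hi, hq⟩, hpost i hi q hq]
        have := hbA i hi
        omega
      · -- eager : single step
        have hEnU : Enabled C.N' (C.Estate M Aa b) u :=
          C.enabled_Estate hnp hEn (fun _ => hAb)
        have hR : Reach C.N' (C.Estate M Aa b) (fire C.N' u (C.Estate M Aa b)) :=
          Reach.head_ hEnU (Reach.refl_ _ _)
        have hE1 : fire C.N' u (C.Estate M Aa b)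
            = C.Estate (fire C.N u M) Aa (b + 1) := by
          funext p
          by_cases hPre : p ∈ C.Pre
          · rw [C.fire'_eq hnp hne, C.fire_Pre_noprod hnp hprod hPre,
              C.Estate_Pre hPre, C.Estate_Pre hPre]
          · by_cases hPost : p ∈ C.Post
            · rw [C.fire'_eq hnp hne, C.fire_Post_cons hnp hcons hPost,
                C.Estate_Post hPost, C.Estate_Post hPost]
              omega
            · rw [C.fire'_eq hnp hne, C.Estate_off hPre hPost]
              exact fire_congr_pt C.N u (C.Estate_off hPre hPost)
        rw [hE1] at hR
        exact hR
      · -- lazy : fire t' then u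
        have hR : Reach C.N' (C.Lstate M Aa b)
            (fire C.N' u (fire C.N' C.t' (C.Lstate M Aa b))) :=
          Reach.head_ hEnT'L (Reach.head_ hEnUL (Reach.refl_ _ _))
        have hL2 : fire C.N' u (fire C.N' C.t' (C.Lstate M Aa b))
            = C.Lstate (fire C.N u M) Aa (b + 1) := by
          funext p
          by_cases hPre : p ∈ C.Pre
          · rw [C.fire'_eq hnp hne, C.fire_Pre_noprod hnp hprod hPre,
              C.fire_t'_Pre hPre, C.Lstate_Pre hPre, C.Lstate_Pre hPre]
            omega
          · by_cases hPost : p ∈ C.Post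
            · rw [C.fire'_eq hnp hne, C.fire_Post_cons hnp hcons hPost,
                C.fire_t'_Post hPost, C.Lstate_Post hPost, C.Lstate_Post hPost]
            · rw [C.fire'_eq hnp hne, C.Lstate_off hPre hPost]
              exact fire_congr_pt C.N u (by rw [C.fire_t'_off hPre hPost, C.Lstate_off hPre hPost])
        rw [hL2] at hR
        exact hR
  · by_cases hprod : C.Produces u
    · -- producer only
      refine ⟨Aa + 1, b, by omega, hbc, fun i hi => by have := hcA i hi; omega,
        ?_, ?_, ?_, ?_, ?_⟩
      · intro i hi p hp
        rw [C.fire_Pre_prod hnp hprod ⟨i, hi, hp⟩, hpre i hi p hp]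
        have := hcA i hi
        omega
      · intro i hi q hq
        rw [C.fire_Post_nocons hnp hcons ⟨i, hi, hq⟩, hpost i hi q hq]
      · -- eager : fire u then t'
        have hEnU : Enabled C.N' (C.Estate M Aa b) u :=
          C.enabled_Estate hnp hEn (fun hc => absurd hc hcons)
        have hEnT' : Enabled C.N' (fire C.N' u (C.Estate M Aa b)) C.t' := by
          refine ⟨C.t'_mem_trans', ?_⟩
          intro p hp
          rw [C.preT'_t'] at hp
          rw [C.fire'_eq hnp hne, C.fire_Pre_prod hnp hprod hp]
          omega
        have hR : Reach C.N' (C.Estate M Aa b)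
            (fire C.N' C.t' (fire C.N' u (C.Estate M Aa b))) :=
          Reach.head_ hEnU (Reach.head_ hEnT' (Reach.refl_ _ _))
        have hE2 : fire C.N' C.t' (fire C.N' u (C.Estate M Aa b))
            = C.Estate (fire C.N u M) (Aa + 1) b := by
          funext p
          by_cases hPre : p ∈ C.Pre
          · rw [C.fire_t'_Pre hPre, C.fire'_eq hnp hne,
              C.fire_Pre_prod hnp hprod hPre, C.Estate_Pre hPre, C.Estate_Pre hPre]
          · by_cases hPost : p ∈ C.Post
            · rw [C.fire_t'_Post hPost, C.fire'_eq hnp hne,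
                C.fire_Post_nocons hnp hcons hPost, C.Estate_Post hPost,
                C.Estate_Post hPost]
              omega
            · rw [C.fire_t'_off hPre hPost, C.fire'_eq hnp hne,
                C.Estate_off hPre hPost]
              exact fire_congr_pt C.N u (C.Estate_off hPre hPost)
        rw [hE2] at hR
        exact hR
      · -- lazy : single step
        have hEnUL : Enabled C.N' (C.Lstate M Aa b) u :=
          C.enabled_Lstate_nocons hnp hEn hcons
        have hR : Reach C.N' (C.Lstate M Aa b) (fire C.N' u (C.Lstate M Aa b)) :=
          Reach.head_ hEnUL (Reach.refl_ _ _)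
        have hL1 : fire C.N' u (C.Lstate M Aa b)
            = C.Lstate (fire C.N u M) (Aa + 1) b := by
          funext p
          by_cases hPre : p ∈ C.Pre
          · rw [C.fire'_eq hnp hne, C.fire_Pre_prod hnp hprod hPre,
              C.Lstate_Pre hPre, C.Lstate_Pre hPre]
            omega
          · by_cases hPost : p ∈ C.Post
            · rw [C.fire'_eq hnp hne, C.fire_Post_nocons hnp hcons hPost,
                C.Lstate_Post hPost, C.Lstate_Post hPost]
            · rw [C.fire'_eq hnp hne, C.Lstate_off hPre hPost]
              exact fire_congr_pt C.N u (C.Lstate_off hPre hPost)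
        rw [hL1] at hR
        exact hR
      · intro _
        refine ⟨fire C.N' u (C.Estate M Aa b), Reach.head_
          (C.enabled_Estate hnp hEn (fun hc => absurd hc hcons)) (Reach.refl_ _ _), ?_⟩
        refine ⟨C.t'_mem_trans', ?_⟩
        intro p hp
        rw [C.preT'_t'] at hp
        rw [C.fire'_eq hnp hne, C.fire_Pre_prod hnp hprod hp]
        omega
    · -- neither producer nor consumer
      refine ⟨Aa, b, le_rfl, hbc, hcA, ?_, ?_, ?_, ?_,
        fun h => absurd h (lt_irrefl _)⟩
      · intro i hi p hp
        rw [C.fire_Pre_noprod hnp hprod ⟨i, hi, hp⟩, hpre i hi p hp]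
      · intro i hi q hq
        rw [C.fire_Post_nocons hnp hcons ⟨i, hi, hq⟩, hpost i hi q hq]
      · have hEnU : Enabled C.N' (C.Estate M Aa b) u :=
          C.enabled_Estate hnp hEn (fun hc => absurd hc hcons)
        have hR : Reach C.N' (C.Estate M Aa b) (fire C.N' u (C.Estate M Aa b)) :=
          Reach.head_ hEnU (Reach.refl_ _ _)
        have hE1 : fire C.N' u (C.Estate M Aa b) = C.Estate (fire C.N u M) Aa b := by
          funext p
          by_cases hPre : p ∈ C.Pre
          · rw [C.fire'_eq hnp hne, C.fire_Pre_noprod hnp hprod hPre,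
              C.Estate_Pre hPre, C.Estate_Pre hPre]
          · by_cases hPost : p ∈ C.Post
            · rw [C.fire'_eq hnp hne, C.fire_Post_nocons hnp hcons hPost,
                C.Estate_Post hPost, C.Estate_Post hPost]
            · rw [C.fire'_eq hnp hne, C.Estate_off hPre hPost]
              exact fire_congr_pt C.N u (C.Estate_off hPre hPost)
        rw [hE1] at hR
        exact hR
      · have hEnUL : Enabled C.N' (C.Lstate M Aa b) u :=
          C.enabled_Lstate_nocons hnp hEn hcons
        have hR : Reach C.N' (C.Lstate M Aa b) (fire C.N' u (C.Lstate M Aa b)) :=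
          Reach.head_ hEnUL (Reach.refl_ _ _)
        have hL1 : fire C.N' u (C.Lstate M Aa b) = C.Lstate (fire C.N u M) Aa b := by
          funext p
          by_cases hPre : p ∈ C.Pre
          · rw [C.fire'_eq hnp hne, C.fire_Pre_noprod hnp hprod hPre,
              C.Lstate_Pre hPre, C.Lstate_Pre hPre]
          · by_cases hPost : p ∈ C.Post
            · rw [C.fire'_eq hnp hne, C.fire_Post_nocons hnp hcons hPost,
                C.Lstate_Post hPost, C.Lstate_Post hPost]
            · rw [C.fire'_eq hnp hne, C.Lstate_off hPre hPost]
              exact fire_congr_pt C.N u (C.Lstate_off hPre hPost)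
        rw [hL1] at hR
        exact hR

end Ctx

end ParRedAux

namespace ParRedAux

namespace Ctx

variable {P T A : Type} (C : Ctx P T A)

/-- The key simulation lemma: every `N`-run respecting the counter invariant
can be mimicked both eagerly and lazily in `N'`. -/
lemma key : ∀ {M σ Me}, FSeq C.N M σ Me →
    ∀ (Aa b : ℕ) (c : ℕ → ℕ),
    (∀ i < C.n, b ≤ c i) → (∀ i < C.n, c i ≤ Aa) →
    (∀ i < C.n, ∀ p ∈ preT C.N (C.t i), M p = Aa - c i) →
    (∀ i < C.n, ∀ q ∈ postT C.N (C.t i), M q = c i - b) →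
    ∃ (Aa' b' : ℕ) (c' : ℕ → ℕ),
      Aa ≤ Aa' ∧
      (∀ i < C.n, b' ≤ c' i) ∧ (∀ i < C.n, c' i ≤ Aa') ∧
      (∀ i < C.n, ∀ p ∈ preT C.N (C.t i), Me p = Aa' - c' i) ∧
      (∀ i < C.n, ∀ q ∈ postT C.N (C.t i), Me q = c' i - b') ∧
      Reach C.N' (C.Estate M Aa b) (C.Estate Me Aa' b') ∧
      Reach C.N' (C.Lstate M Aa b) (C.Lstate Me Aa' b') ∧
      (Aa < Aa' → ∃ Mw, Reach C.N' (C.Estate M Aa b) Mw ∧ Enabled C.N' Mw C.t') := by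
  intro M σ Me h
  induction h with
  | nil M =>
    intro Aa b c hbc hcA hpre hpost
    exact ⟨Aa, b, c, le_rfl, hbc, hcA, hpre, hpost, Reach.refl_ _ _, Reach.refl_ _ _,
      fun h => absurd h (lt_irrefl _)⟩
  | cons M u σ Me hEn hFS ih =>
    intro Aa b c hbc hcA hpre hpost
    by_cases hui : ∃ i < C.n, u = C.t i
    · -- firing a pattern transition
      obtain ⟨i0, hi0, hueq⟩ := hui
      subst hueq
      have hA : c i0 < Aa := by
        obtain ⟨p₀, hp₀⟩ := C.preNe i0 hi0
        have h1 := hEn.2 p₀ hp₀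
        have h2 := hpre i0 hi0 p₀ hp₀
        have h3 := hcA i0 hi0
        omega
      have hb0 := hbc i0 hi0
      set c₂ : ℕ → ℕ := fun j => if j = i0 then c i0 + 1 else c j with hc₂
      have hceq : ∀ j, c₂ j = if j = i0 then c i0 + 1 else c j := fun _ => rfl
      have hbc₂ : ∀ j < C.n, b ≤ c₂ j := by
        intro j hj
        by_cases h : j = i0
        · rw [hceq j, if_pos h]; omega
        · rw [hceq j, if_neg h]; exact hbc j hj
      have hcA₂ : ∀ j < C.n, c₂ j ≤ Aa := by
        intro j hj
        by_cases h : j = i0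
        · rw [hceq j, if_pos h]; omega
        · rw [hceq j, if_neg h]; exact hcA j hj
      have hpre₂ : ∀ j < C.n, ∀ p ∈ preT C.N (C.t j),
          fire C.N (C.t i0) M p = Aa - c₂ j := by
        intro j hj p hp
        by_cases h : j = i0
        · subst h
          rw [C.fire_ti_pre hi0 hp, hpre j hj p hp, hceq j, if_pos rfl]
          omega
        · have h1 : p ∉ preT C.N (C.t i0) :=
            fun hc => C.preDisj j hj i0 hi0 h p hp hc
          have h2 : p ∉ postT C.N (C.t i0) :=
            fun hc => C.prePost p ⟨j, hj, hp⟩ ⟨i0, hi0, hc⟩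
          rw [C.fire_ti_off h1 h2, hpre j hj p hp, hceq j, if_neg h]
      have hpost₂ : ∀ j < C.n, ∀ q ∈ postT C.N (C.t j),
          fire C.N (C.t i0) M q = c₂ j - b := by
        intro j hj q hq
        by_cases h : j = i0
        · subst h
          rw [C.fire_ti_post hi0 hq, hpost j hj q hq, hceq j, if_pos rfl]
          omega
        · have h1 : q ∉ preT C.N (C.t i0) :=
            fun hc => C.prePost q ⟨i0, hi0, hc⟩ ⟨j, hj, hq⟩
          have h2 : q ∉ postT C.N (C.t i0) :=
            fun hc => C.postDisj j hj i0 hi0 h q hq hc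
          rw [C.fire_ti_off h1 h2, hpost j hj q hq, hceq j, if_neg h]
      obtain ⟨Aa', b', c', hAA, hbc', hcA', hpre', hpost', hRE, hRL, hW⟩ :=
        ih Aa b c₂ hbc₂ hcA₂ hpre₂ hpost₂
      have hoff : ∀ p, p ∉ C.Pre → p ∉ C.Post →
          M p = fire C.N (C.t i0) M p := by
        intro p hp hq
        rw [C.fire_ti_off (fun hc => hp ⟨i0, hi0, hc⟩) (fun hc => hq ⟨i0, hi0, hc⟩)]
      rw [← C.Estate_congr hoff] at hRE hW
      rw [← C.Lstate_congr hoff] at hRL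
      exact ⟨Aa', b', c', hAA, hbc', hcA', hpre', hpost', hRE, hRL, hW⟩
    · -- firing a non-pattern transition
      obtain ⟨Aa₂, b₂, hA2, hbc₂, hcA₂, hpre₂, hpost₂, hRE₂, hRL₂, hW₂⟩ :=
        C.step_sim hui hEn hbc hcA hpre hpost
      obtain ⟨Aa', b', c', hAA, hbc', hcA', hpre', hpost', hRE, hRL, hW⟩ :=
        ih Aa₂ b₂ c hbc₂ hcA₂ hpre₂ hpost₂
      refine ⟨Aa', b', c', le_trans hA2 hAA, hbc', hcA', hpre', hpost',
        Reach.trans_ hRE₂ hRE, Reach.trans_ hRL₂ hRL, ?_⟩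
      intro hlt
      rcases lt_or_eq_of_le hA2 with h | h
      · exact hW₂ h
      · subst h
        obtain ⟨Mw, hr, he⟩ := hW hlt
        exact ⟨Mw, Reach.trans_ hRE₂ hr, he⟩

end Ctx

end ParRedAux

namespace ParRedAux

variable {P T A : Type}

lemma pre_nonempty_of_path {N : LPNet P T A} {pi : P} {u : T}
    (h : Relation.ReflTransGen (netEdge N) (Sum.inl pi) (Sum.inr u)) :
    ∃ p, p ∈ preT N u := by
  rcases h.cases_tail with h | ⟨c, _, hstep⟩
  · exact absurd h (by simp)
  · rcases hstep with ⟨p, t0, _, hy, harc⟩ | ⟨t0, p, _, hy, _⟩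
    · obtain rfl : t0 = u := (Sum.inr.inj hy).symm
      exact ⟨p, harc⟩
    · exact absurd hy (by simp)

lemma post_nonempty_of_path {N : LPNet P T A} {po : P} {u : T}
    (h : Relation.ReflTransGen (netEdge N) (Sum.inr u) (Sum.inl po)) :
    ∃ p, p ∈ postT N u := by
  rcases h.cases_head with h | ⟨c, hstep, _⟩
  · exact absurd h (by simp)
  · rcases hstep with ⟨p, t0, hx, _, _⟩ | ⟨t0, p, hx, _, harc⟩
    · exact absurd hx (by simp)
    · obtain rfl : t0 = u := (Sum.inr.inj hx).symm
      exact ⟨p, harc⟩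

namespace Ctx

variable (C : Ctx P T A)

lemma Estate_eq_self {M : P → ℕ} {Aa b : ℕ} (h0 : Aa - b = 0)
    (hP : ∀ p ∈ C.Pre, M p = 0) (hQ : ∀ q ∈ C.Post, M q = 0) :
    C.Estate M Aa b = M := by
  funext p
  by_cases hPre : p ∈ C.Pre
  · rw [C.Estate_Pre hPre, hP p hPre]
  · by_cases hPost : p ∈ C.Post
    · rw [C.Estate_Post hPost, hQ p hPost, h0]
    · rw [C.Estate_off hPre hPost]

lemma Lstate_eq_self {M : P → ℕ} {Aa b : ℕ} (h0 : Aa - b = 0)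
    (hP : ∀ p ∈ C.Pre, M p = 0) (hQ : ∀ q ∈ C.Post, M q = 0) :
    C.Lstate M Aa b = M := by
  funext p
  by_cases hPre : p ∈ C.Pre
  · rw [C.Lstate_Pre hPre, hP p hPre, h0]
  · by_cases hPost : p ∈ C.Post
    · rw [C.Lstate_Post hPost, hQ p hPost]
    · rw [C.Lstate_off hPre hPost]

end Ctx

end ParRedAux

/-- The `∧`-pattern reduction is soundness preserving in both directions: if `t₁,...,tₙ` form a `∧`-pattern in the PTree-WF-net `N` and `N'` is the `∧`-reduced net, then `N'` is sound iff `N` is sound. -/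
theorem par_reduction_sound_iff (P T A : Type)
    (N N' : LPNet P T A) (pi po : P)
    (hWF : IsWFNet N pi po)
    (n : ℕ) (t : ℕ → T) (t' : T)
    (hpat : ParPattern N n t)
    (hred : ParReduced N N' n t t') :
    Sound N' pi po ↔ Sound N pi po := by
  classical
  obtain ⟨hpi, hpo, -, -, -, harcPt, harcTp, hprePi, hpostPo, -, hpath⟩ := hWF
  obtain ⟨hn2, htr, -, h1, h2, h3, h4, h5, h6, h7, h8, -, -⟩ := hpat
  obtain ⟨ht', -, htrans', hpt', htp', -⟩ := hred
  have h0n : 0 < n := by omega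
  have preNe : ∀ i < n, ∃ p, p ∈ preT N (t i) :=
    fun i hi => ParRedAux.pre_nonempty_of_path (hpath (t i) (htr i hi)).1
  have postNe : ∀ i < n, ∃ q, q ∈ postT N (t i) :=
    fun i hi => ParRedAux.post_nonempty_of_path (hpath (t i) (htr i hi)).2
  have preDisj : ∀ i < n, ∀ j < n, i ≠ j →
      ∀ p, p ∈ preT N (t i) → p ∈ preT N (t j) → False := by
    intro i hi j hj hij p hp hq
    have h := h1 i hi j hj hij
    have hm : p ∈ preT N (t i) ∩ preT N (t j) := ⟨hp, hq⟩
    rw [h] at hm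
    exact absurd hm (Set.notMem_empty _)
  have postDisj : ∀ i < n, ∀ j < n, i ≠ j →
      ∀ q, q ∈ postT N (t i) → q ∈ postT N (t j) → False := by
    intro i hi j hj hij q hp hq
    have h := h2 i hi j hj hij
    have hm : q ∈ postT N (t i) ∩ postT N (t j) := ⟨hp, hq⟩
    rw [h] at hm
    exact absurd hm (Set.notMem_empty _)
  have prePost : ∀ p, (∃ i < n, p ∈ preT N (t i)) →
      (∃ j < n, p ∈ postT N (t j)) → False := by
    rintro p hp ⟨j, hj, hq⟩
    have h := h5 p hp
    have hm : t j ∈ preP N p ∩ {u | ∃ i < n, u = t i} := ⟨hq, ⟨j, hj, rfl⟩⟩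
    rw [h] at hm
    exact absurd hm (Set.notMem_empty _)
  have preOnly : ∀ i < n, ∀ p ∈ preT N (t i), ∀ u, (p, u) ∈ N.pt → u = t i := by
    intro i hi p hp u harc
    have h := h3 i hi p hp
    have hm : u ∈ postP N p := harc
    rw [h] at hm
    exact hm
  have postOnly : ∀ i < n, ∀ q ∈ postT N (t i), ∀ u, (u, q) ∈ N.tp → u = t i := by
    intro i hi q hq u harc
    have h := h4 i hi q hq
    have hm : u ∈ preP N q := harc
    rw [h] at hm
    exact hm
  have prodAll : ∀ u p p', (∃ i < n, p ∈ preT N (t i)) →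
      (∃ i < n, p' ∈ preT N (t i)) → (u, p) ∈ N.tp → (u, p') ∈ N.tp := by
    intro u p p' hp hp' harc
    have h := h6 p hp p' hp'
    have hm : u ∈ preP N p := harc
    rw [h] at hm
    exact hm
  have consAll : ∀ u q q', (∃ i < n, q ∈ postT N (t i)) →
      (∃ i < n, q' ∈ postT N (t i)) → (q, u) ∈ N.pt → (q', u) ∈ N.pt := by
    intro u q q' hq hq' harc
    have h := h8 q hq q' hq'
    have hm : u ∈ postP N q := harc
    rw [h] at hm
    exact hm
  have patNotProd : ∀ j < n, ∀ p, (∃ i < n, p ∈ preT N (t i)) → (t j, p) ∉ N.tp := by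
    intro j hj p hp harc
    have h := h5 p hp
    have hm : t j ∈ preP N p ∩ {u | ∃ i < n, u = t i} := ⟨harc, ⟨j, hj, rfl⟩⟩
    rw [h] at hm
    exact absurd hm (Set.notMem_empty _)
  have patNotCons : ∀ j < n, ∀ q, (∃ i < n, q ∈ postT N (t i)) → (q, t j) ∉ N.pt := by
    intro j hj q hq harc
    have h := h7 q hq
    have hm : t j ∈ postP N q ∩ {u | ∃ i < n, u = t i} := ⟨harc, ⟨j, hj, rfl⟩⟩
    rw [h] at hm
    exact absurd hm (Set.notMem_empty _)
  have piPre : ¬ ∃ i < n, pi ∈ preT N (t i) := by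
    rintro ⟨i, hi, hpi0⟩
    obtain ⟨j, hj, hji⟩ : ∃ j, j < n ∧ j ≠ i := by
      by_cases h : i = 0
      · exact ⟨1, by omega, by omega⟩
      · exact ⟨0, h0n, fun hh => h hh.symm⟩
    obtain ⟨p', hp'⟩ := preNe j hj
    have hp'pl : p' ∈ N.places := (harcPt (p', t j) hp').1
    have hpiempty : preP N pi = ∅ := (hprePi pi hpi).mpr rfl
    have heq : preP N pi = preP N p' := h6 pi ⟨i, hi, hpi0⟩ p' ⟨j, hj, hp'⟩
    have hp'empty : preP N p' = ∅ := heq ▸ hpiempty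
    have hpp : p' = pi := (hprePi p' hp'pl).mp hp'empty
    rw [hpp] at hp'
    exact preDisj j hj i hi hji pi hp' hpi0
  have piPost : ¬ ∃ i < n, pi ∈ postT N (t i) := by
    rintro ⟨i, hi, hq⟩
    have hpiempty : preP N pi = ∅ := (hprePi pi hpi).mpr rfl
    have hm : t i ∈ preP N pi := hq
    rw [hpiempty] at hm
    exact absurd hm (Set.notMem_empty _)
  have poPre : ¬ ∃ i < n, po ∈ preT N (t i) := by
    rintro ⟨i, hi, hp⟩
    have hpoempty : postP N po = ∅ := (hpostPo po hpo).mpr rfl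
    have hm : t i ∈ postP N po := hp
    rw [hpoempty] at hm
    exact absurd hm (Set.notMem_empty _)
  have poPost : ¬ ∃ i < n, po ∈ postT N (t i) := by
    rintro ⟨i, hi, hq0⟩
    obtain ⟨j, hj, hji⟩ : ∃ j, j < n ∧ j ≠ i := by
      by_cases h : i = 0
      · exact ⟨1, by omega, by omega⟩
      · exact ⟨0, h0n, fun hh => h hh.symm⟩
    obtain ⟨q', hq'⟩ := postNe j hj
    have hq'pl : q' ∈ N.places := (harcTp (t j, q') hq').2
    have hpoempty : postP N po = ∅ := (hpostPo po hpo).mpr rfl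
    have heq : postP N po = postP N q' := h8 po ⟨i, hi, hq0⟩ q' ⟨j, hj, hq'⟩
    have hq'empty : postP N q' = ∅ := heq ▸ hpoempty
    have hqq : q' = po := (hpostPo q' hq'pl).mp hq'empty
    rw [hqq] at hq'
    exact postDisj j hj i hi hji po hq' hq0
  set C : ParRedAux.Ctx P T A :=
    { N := N, N' := N', pi := pi, po := po, n := n, t := t, t' := t',
      hn := hn2, htr := htr, ht' := ht',
      ptWf := fun a ha => (harcPt a ha).2,
      tpWf := fun a ha => (harcTp a ha).1,
      preNe := preNe, postNe := postNe, preDisj := preDisj, postDisj := postDisj,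
      prePost := prePost, piPre := piPre, piPost := piPost, poPre := poPre,
      poPost := poPost, preOnly := preOnly, postOnly := postOnly,
      prodAll := prodAll, consAll := consAll,
      patNotProd := patNotProd, patNotCons := patNotCons,
      htrans' := htrans', hpt' := hpt', htp' := htp' } with hC
  have hpiPre0 : ∀ p ∈ C.Pre, mark {pi} p = 0 := by
    intro p hp
    rw [ParRedAux.mark_singleton_apply]
    rw [if_neg]
    intro h
    exact piPre (h ▸ hp)
  have hpiPost0 : ∀ q ∈ C.Post, mark {pi} q = 0 := by
    intro q hq
    rw [ParRedAux.mark_singleton_apply]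
    rw [if_neg]
    intro h
    exact piPost (h ▸ hq)
  have hpoPre0 : ∀ p ∈ C.Pre, mark {po} p = 0 := by
    intro p hp
    rw [ParRedAux.mark_singleton_apply]
    rw [if_neg]
    intro h
    exact poPre (h ▸ hp)
  have hpoPost0 : ∀ q ∈ C.Post, mark {po} q = 0 := by
    intro q hq
    rw [ParRedAux.mark_singleton_apply]
    rw [if_neg]
    intro h
    exact poPost (h ▸ hq)
  have E0 : C.Estate (mark {pi}) 0 0 = mark {pi} :=
    C.Estate_eq_self rfl hpiPre0 hpiPost0
  have L0 : C.Lstate (mark {pi}) 0 0 = mark {pi} :=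
    C.Lstate_eq_self rfl hpiPre0 hpiPost0
  have hpre0 : ∀ i < C.n, ∀ p ∈ preT C.N (C.t i), mark {pi} p = 0 - (0 : ℕ) :=
    fun i hi p hp => by rw [hpiPre0 p ⟨i, hi, hp⟩]
  have hpost0 : ∀ i < C.n, ∀ q ∈ postT C.N (C.t i), mark {pi} q = 0 - (0 : ℕ) :=
    fun i hi q hq => by rw [hpiPost0 q ⟨i, hi, hq⟩]
  have reach_transfer : ∀ {M M' : P → ℕ}, Reach N' M M' → Reach N M M' := by
    rintro M M' ⟨σ, hσ⟩
    exact C.run_transfer hσ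
  constructor
  · -- Sound N' → Sound N
    rintro ⟨hsafe', hproper', hlive'⟩
    refine ⟨?_, ?_, ?_⟩
    · -- safety
      rintro M ⟨σ, hσ⟩ p
      obtain ⟨Aa', b', c', -, hbc', hcA', hpre', hpost', hRE, hRL, -⟩ :=
        C.key hσ 0 0 (fun _ => 0) (fun _ _ => le_rfl) (fun _ _ => le_rfl) hpre0 hpost0
      rw [E0] at hRE
      rw [L0] at hRL
      by_cases hPre : p ∈ C.Pre
      · obtain ⟨i, hi, hp⟩ := hPre
        have hv := hpre' i hi p hp
        have hb := hsafe' _ hRL p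
        rw [C.Lstate_Pre ⟨i, hi, hp⟩] at hb
        have := hbc' i hi
        omega
      · by_cases hPost : p ∈ C.Post
        · obtain ⟨i, hi, hq⟩ := hPost
          have hv := hpost' i hi p hq
          have hb := hsafe' _ hRE p
          rw [C.Estate_Post ⟨i, hi, hq⟩] at hb
          have := hcA' i hi
          omega
        · have hb := hsafe' _ hRE p
          rw [C.Estate_off hPre hPost] at hb
          exact hb
    · -- proper completion
      rintro M ⟨σ, hσ⟩
      obtain ⟨Aa', b', c', -, hbc', hcA', hpre', hpost', hRE, -, -⟩ :=
        C.key hσ 0 0 (fun _ => 0) (fun _ _ => le_rfl) (fun _ _ => le_rfl) hpre0 hpost0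
      rw [E0] at hRE
      have hcomp : Reach N M (C.Estate M Aa' b') :=
        C.comp_reach M Aa' b' c' hbc' hcA' hpre' hpost'
      have hfin : Reach N' (C.Estate M Aa' b') (mark {po}) := hproper' _ hRE
      exact ParRedAux.Reach.trans_ hcomp (reach_transfer hfin)
    · -- liveness
      intro u hu
      by_cases hui : ∃ i < n, u = t i
      · obtain ⟨i, hi, rfl⟩ := hui
        obtain ⟨Mw, hRw, hEw⟩ := hlive' t' C.t'_mem_trans'
        refine ⟨Mw, reach_transfer hRw, hu, ?_⟩
        intro p hp
        refine hEw.2 p ?_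
        rw [C.preT'_t']
        exact ⟨i, hi, hp⟩
      · have hne : u ≠ t' := fun h => ht' (h ▸ hu)
        obtain ⟨Mw, hRw, hEw⟩ := hlive' u (C.mem_trans'_of hu hui)
        refine ⟨Mw, reach_transfer hRw, hu, ?_⟩
        intro p hp
        refine hEw.2 p ?_
        rw [C.preT'_eq hui hne]
        exact hp
  · -- Sound N → Sound N'
    rintro ⟨hsafe, hproper, hlive⟩
    refine ⟨?_, ?_, ?_⟩
    · -- safety
      rintro M ⟨σ, hσ⟩ p
      obtain ⟨σ', hσ'⟩ := C.run_transfer hσ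
      exact hsafe M ⟨σ', hσ'⟩ p
    · -- proper completion
      rintro M ⟨σ, hσ⟩
      obtain ⟨x, y, hx, hy⟩ := C.sync hσ 0 0 hpiPre0 hpiPost0
      have hMN : Reach N (mark {pi}) M := reach_transfer ⟨σ, hσ⟩
      obtain ⟨σ₂, hσ₂⟩ := hproper M hMN
      have hpreM : ∀ i < C.n, ∀ p ∈ preT C.N (C.t i), M p = x + y - y := by
        intro i hi p hp
        rw [hx p ⟨i, hi, hp⟩]
        omega
      have hpostM : ∀ i < C.n, ∀ q ∈ postT C.N (C.t i), M q = y - 0 := by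
        intro i hi q hq
        rw [hy q ⟨i, hi, hq⟩]
        omega
      obtain ⟨Aa', b', c', -, hbc', hcA', hpre', hpost', hRE, -, -⟩ :=
        C.key hσ₂ (x + y) 0 (fun _ => y) (fun _ _ => Nat.zero_le _)
          (fun _ _ => by show y ≤ x + y; omega) hpreM hpostM
      obtain ⟨p₀, hp₀⟩ := preNe 0 h0n
      obtain ⟨q₀, hq₀⟩ := postNe 0 h0n
      have hv1 : mark {po} p₀ = Aa' - c' 0 := hpre' 0 h0n p₀ hp₀
      have hv2 : mark {po} q₀ = c' 0 - b' := hpost' 0 h0n q₀ hq₀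
      rw [hpoPre0 p₀ ⟨0, h0n, hp₀⟩] at hv1
      rw [hpoPost0 q₀ ⟨0, h0n, hq₀⟩] at hv2
      have hb0 := hbc' 0 h0n
      have hA0 := hcA' 0 h0n
      have hEpo : C.Estate (mark {po}) Aa' b' = mark {po} :=
        C.Estate_eq_self (by omega) hpoPre0 hpoPost0
      rw [hEpo] at hRE
      exact ParRedAux.Reach.trans_ (C.t'_repeat_reach hx hy) hRE
    · -- liveness
      intro u hu'
      rcases C.of_mem_trans' hu' with rfl | ⟨hu, hnp⟩
      · obtain ⟨M, hRM, hEM⟩ := hlive (t 0) (htr 0 h0n)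
        obtain ⟨σ, hσ⟩ := hRM
        obtain ⟨Aa', b', c', -, hbc', hcA', hpre', hpost', -, -, hW⟩ :=
          C.key hσ 0 0 (fun _ => 0) (fun _ _ => le_rfl) (fun _ _ => le_rfl) hpre0 hpost0
        obtain ⟨p₀, hp₀⟩ := preNe 0 h0n
        have hv := hpre' 0 h0n p₀ hp₀
        have hpos := hEM.2 p₀ hp₀
        have hlt : 0 < Aa' := by omega
        obtain ⟨Mw, hr, he⟩ := hW hlt
        rw [E0] at hr
        exact ⟨Mw, hr, he⟩
      · obtain ⟨M, hRM, hEM⟩ := hlive u hu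
        obtain ⟨σ, hσ⟩ := hRM
        obtain ⟨Aa', b', c', -, hbc', hcA', hpre', hpost', hRE, -, -⟩ :=
          C.key hσ 0 0 (fun _ => 0) (fun _ _ => le_rfl) (fun _ _ => le_rfl) hpre0 hpost0
        rw [E0] at hRE
        refine ⟨C.Estate M Aa' b', hRE, C.enabled_Estate hnp hEM ?_⟩
        intro hc
        obtain ⟨q, hqPost, harc⟩ := hc
        obtain ⟨i, hi, hq⟩ := hqPost
        have hval := hEM.2 q harc
        have hv := hpost' i hi q hq
        have := hcA' i hi
        have := hbc' i hi
        omega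
end

section
/- The ×-pattern reduction preserves the tree-induced language (Lemma 2 of the paper, instantiated to the exclusive-choice operator, stated via the tree-induced language, which equals the labelled language of the unfolding): if W̃ is a PTree-WF-net, t₁,...,tₙ form a ×-pattern in W̃, and W̃' is the ×-reduced net, then L(W̃') = L(W̃), where L denotes the tree-induced language from [p_i] to [p_o]. -/
variable {P T A : Type}

/-- The set of all order-preserving merges (interleavings) of two words,
i.e., the shuffle operator `σ ⇋ σ'`. -/
def shuffle {α : Type} : List α → List α → Set (List α)
  | [], s => {s}
  | s, [] => {s}
  | x :: s, y :: s' =>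
      (List.cons x) '' shuffle s (y :: s') ∪ (List.cons y) '' shuffle (x :: s) s'
  termination_by s t => s.length + t.length

/-- Elementwise concatenation of two languages. -/
def concatLang {α : Type} (L₁ L₂ : Set (List α)) : Set (List α) :=
  {w | ∃ u ∈ L₁, ∃ v ∈ L₂, w = u ++ v}

/-- The shuffle operator extended to languages. -/
def shuffleLang {α : Type} (L₁ L₂ : Set (List α)) : Set (List α) :=
  {w | ∃ u ∈ L₁, ∃ v ∈ L₂, w ∈ shuffle u v}

/-- Elementwise concatenation `L₁ · L₂ ⋯ Lₙ` of finitely many languages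
(the empty product is `{ε}`). -/
def concatFin {α : Type} : (n : ℕ) → (Fin n → Set (List α)) → Set (List α)
  | 0, _ => {[]}
  | n + 1, L => concatLang (L 0) (concatFin n (fun i => L i.succ))

/-- The shuffle `L₁ ⇋ L₂ ⇋ ⋯ ⇋ Lₙ` of finitely many languages. -/
def shuffleFin {α : Type} : (n : ℕ) → (Fin n → Set (List α)) → Set (List α)
  | 0, _ => {[]}
  | n + 1, L => shuffleLang (L 0) (shuffleFin n (fun i => L i.succ))

/-- `loopPow L₁ L₂ k = L₁ · (L₂ · L₁)^k`. -/
def loopPow {α : Type} (L₁ L₂ : Set (List α)) : ℕ → Set (List α)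
  | 0 => L₁
  | k + 1 => concatLang (loopPow L₁ L₂ k) (concatLang L₂ L₁)

/-- The language of the loop operator:
`{σ₁·σ'₁·σ₂·σ'₂ ⋯ σ'_{m−1}·σₘ | m ≥ 1, σᵢ ∈ L₁, σ'ᵢ ∈ L₂}`. -/
def loopLang {α : Type} (L₁ L₂ : Set (List α)) : Set (List α) :=
  {w | ∃ k : ℕ, w ∈ loopPow L₁ L₂ k}

/-- The language `ℒ_Q(Q) ⊆ Σ*` of a process tree. -/
def PTree.lang {A : Type} : PTree A → Set (List A)
  | .tau => {[]}
  | .act a => {[a]}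
  | .seq n f => concatFin (n + 1) (fun i => (f i).lang)
  | .choice n f => ⋃ i : Fin (n + 1), (f i).lang
  | .par n f => shuffleFin (n + 1) (fun i => (f i).lang)
  | .loop q₁ q₂ => loopLang q₁.lang q₂.lang

/-- `ℒ_Q(ℓ(u₁)) · ℒ_Q(ℓ(u₂)) ⋯ ℒ_Q(ℓ(uₖ))`: the elementwise concatenation of
the tree languages of the labels along a transition sequence. -/
def wordLang (lab : T → PTree A) : List T → Set (List A)
  | [] => {[]}
  | u :: σ => concatLang (lab u).lang (wordLang lab σ)

/-- The tree-induced language of a PTree-WF-net (which equals the labelled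
language of its unfolding): all words obtained from a firing sequence from
`[p_i]` to `[p_o]` by concatenating words of the labels' tree languages. -/
def treeLang (N : LPNet P T A) (pi po : P) : Set (List A) :=
  {w | ∃ σ, FSeq N (mark {pi}) σ (mark {po}) ∧ w ∈ wordLang N.label σ}

open Classical

private lemma choice_forward (N N' : LPNet P T A) (pi po : P)
    (hWF : IsWFNet N pi po) (n : ℕ) (t : ℕ → T) (t' : T)
    (hpat : ChoicePattern N n t) (hred : ChoiceReduced N N' n t t')
    {M M' : P → ℕ} {σ : List T} (hfs : FSeq N M σ M') :
    ∀ w ∈ wordLang N.label σ, ∃ σ', FSeq N' M σ' M' ∧ w ∈ wordLang N'.label σ' := by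
  obtain ⟨-, -, -, -, -, hptA, htpA, -⟩ := hWF
  obtain ⟨h2n, htmem, -, hpreEq, hpostEq, -⟩ := hpat
  obtain ⟨ht', hpl, htr, hpt, htp, hlab⟩ := hred
  have hpre' : preT N' t' = preT N (t 0) := by
    ext p
    simp only [preT, Set.mem_setOf_eq, hpt, Set.mem_union, Set.mem_sep_iff]
    constructor
    · rintro (⟨hmem, -⟩ | ⟨h, -⟩)
      · exact absurd ((hptA _ hmem).2) ht'
      · exact h
    · intro h; exact Or.inr ⟨h, trivial⟩
  have hpost' : postT N' t' = postT N (t 0) := by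
    ext p
    simp only [postT, Set.mem_setOf_eq, htp, Set.mem_union, Set.mem_sep_iff]
    constructor
    · rintro (⟨hmem, -⟩ | ⟨-, h⟩)
      · exact absurd ((htpA _ hmem).1) ht'
      · exact h
    · intro h; exact Or.inr ⟨trivial, h⟩
  induction hfs with
  | nil M => intro w hw; exact ⟨[], FSeq.nil M, hw⟩
  | cons M u σ M' hEn hrest ih =>
    intro w hw
    obtain ⟨a, ha, b, hb, rfl⟩ := hw
    obtain ⟨σ'', hfs'', hb'⟩ := ih b hb
    by_cases hu : ∃ i, i < n ∧ u = t i
    · obtain ⟨i, hi, rfl⟩ := hu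
      have hfire : fire N' t' = fire N (t i) := by
        funext M p
        simp only [fire, hpre', hpost', hpreEq i hi, hpostEq i hi]
      refine ⟨t' :: σ'', FSeq.cons _ _ _ _ ⟨?_, ?_⟩ ?_, ?_⟩
      · rw [htr]; exact Or.inr rfl
      · rw [hpre', ← hpreEq i hi]; exact hEn.2
      · rw [hfire]; exact hfs''
      · refine ⟨a, ?_, b, hb', rfl⟩
        have hlt' : N'.label t' = PTree.choice (n - 1) (fun j => N.label (t j.val)) := by
          rw [hlab]; simp
        rw [hlt']
        have hin : i < n - 1 + 1 := by omega
        exact Set.mem_iUnion.2 ⟨⟨i, hin⟩, ha⟩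
    · have hut' : u ≠ t' := fun h => ht' (h ▸ hEn.1)
      have hpreU : preT N' u = preT N u := by
        ext p
        simp only [preT, Set.mem_setOf_eq, hpt, Set.mem_union, Set.mem_sep_iff]
        constructor
        · rintro (⟨h, -⟩ | ⟨-, h⟩)
          · exact h
          · exact absurd h hut'
        · intro h; exact Or.inl ⟨h, hu⟩
      have hpostU : postT N' u = postT N u := by
        ext p
        simp only [postT, Set.mem_setOf_eq, htp, Set.mem_union, Set.mem_sep_iff]
        constructor
        · rintro (⟨h, -⟩ | ⟨h, -⟩)
          · exact h
          · exact absurd h hut'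
        · intro h; exact Or.inl ⟨h, hu⟩
      have hfire : fire N' u = fire N u := by
        funext M p; simp only [fire, hpreU, hpostU]
      refine ⟨u :: σ'', FSeq.cons _ _ _ _ ⟨?_, ?_⟩ ?_, ?_⟩
      · rw [htr]; exact Or.inl ⟨hEn.1, hu⟩
      · rw [hpreU]; exact hEn.2
      · rw [hfire]; exact hfs''
      · refine ⟨a, ?_, b, hb', rfl⟩
        have : N'.label u = N.label u := by rw [hlab]; simp [hut']
        rw [this]; exact ha

private lemma choice_backward (N N' : LPNet P T A) (pi po : P)
    (hWF : IsWFNet N pi po) (n : ℕ) (t : ℕ → T) (t' : T)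
    (hpat : ChoicePattern N n t) (hred : ChoiceReduced N N' n t t')
    {M M' : P → ℕ} {σ : List T} (hfs : FSeq N' M σ M') :
    ∀ w ∈ wordLang N'.label σ, ∃ σ', FSeq N M σ' M' ∧ w ∈ wordLang N.label σ' := by
  obtain ⟨-, -, -, -, -, hptA, htpA, -⟩ := hWF
  obtain ⟨h2n, htmem, -, hpreEq, hpostEq, -⟩ := hpat
  obtain ⟨ht', hpl, htr, hpt, htp, hlab⟩ := hred
  have hpre' : preT N' t' = preT N (t 0) := by
    ext p
    simp only [preT, Set.mem_setOf_eq, hpt, Set.mem_union, Set.mem_sep_iff]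
    constructor
    · rintro (⟨hmem, -⟩ | ⟨h, -⟩)
      · exact absurd ((hptA _ hmem).2) ht'
      · exact h
    · intro h; exact Or.inr ⟨h, trivial⟩
  have hpost' : postT N' t' = postT N (t 0) := by
    ext p
    simp only [postT, Set.mem_setOf_eq, htp, Set.mem_union, Set.mem_sep_iff]
    constructor
    · rintro (⟨hmem, -⟩ | ⟨-, h⟩)
      · exact absurd ((htpA _ hmem).1) ht'
      · exact h
    · intro h; exact Or.inr ⟨trivial, h⟩
  induction hfs with
  | nil M => intro w hw; exact ⟨[], FSeq.nil M, hw⟩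
  | cons M u σ M' hEn hrest ih =>
    intro w hw
    obtain ⟨a, ha, b, hb, rfl⟩ := hw
    obtain ⟨σ'', hfs'', hb'⟩ := ih b hb
    have hutr := hEn.1
    rw [htr] at hutr
    rcases hutr with ⟨huN, hu⟩ | hu
    · -- u is an old transition, not in the pattern
      have hu : ¬ ∃ i, i < n ∧ u = t i := hu
      have hut' : u ≠ t' := fun h => ht' (h ▸ huN)
      have hpreU : preT N' u = preT N u := by
        ext p
        simp only [preT, Set.mem_setOf_eq, hpt, Set.mem_union, Set.mem_sep_iff]
        constructor
        · rintro (⟨h, -⟩ | ⟨-, h⟩)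
          · exact h
          · exact absurd h hut'
        · intro h; exact Or.inl ⟨h, hu⟩
      have hpostU : postT N' u = postT N u := by
        ext p
        simp only [postT, Set.mem_setOf_eq, htp, Set.mem_union, Set.mem_sep_iff]
        constructor
        · rintro (⟨h, -⟩ | ⟨h, -⟩)
          · exact h
          · exact absurd h hut'
        · intro h; exact Or.inl ⟨h, hu⟩
      have hfire : fire N' u = fire N u := by
        funext M p; simp only [fire, hpreU, hpostU]
      refine ⟨u :: σ'', FSeq.cons _ _ _ _ ⟨huN, ?_⟩ ?_, ?_⟩
      · rw [← hpreU]; exact hEn.2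
      · rw [← hfire]; exact hfs''
      · refine ⟨a, ?_, b, hb', rfl⟩
        have : N'.label u = N.label u := by rw [hlab]; simp [hut']
        rw [← this]; exact ha
    · -- u = t'
      have hu : u = t' := hu
      subst hu
      have hlt' : N'.label u = PTree.choice (n - 1) (fun j => N.label (t j.val)) := by
        rw [hlab]; simp
      rw [hlt'] at ha
      obtain ⟨j, haj⟩ := Set.mem_iUnion.1 ha
      have hjn : (j : ℕ) < n := by have := j.2; omega
      have hfire : fire N' u = fire N (t j.val) := by
        funext M p
        simp only [fire, hpre', hpost', hpreEq j.val hjn, hpostEq j.val hjn]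
      refine ⟨t j.val :: σ'', FSeq.cons _ _ _ _ ⟨htmem _ hjn, ?_⟩ ?_, ?_⟩
      · rw [hpreEq j.val hjn, ← hpre']; exact hEn.2
      · rw [← hfire]; exact hfs''
      · exact ⟨a, haj, b, hb', rfl⟩

/-- The `×`-pattern reduction preserves the tree-induced language: if `t₁,...,tₙ` form a `×`-pattern in the PTree-WF-net `N` and `N'` is the `×`-reduced net, then `L(N') = L(N)`. -/
theorem choice_reduction_lang_eq (P T A : Type)
    (N N' : LPNet P T A) (pi po : P)
    (hWF : IsWFNet N pi po)
    (n : ℕ) (t : ℕ → T) (t' : T)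
    (hpat : ChoicePattern N n t)
    (hred : ChoiceReduced N N' n t t') :
    treeLang N' pi po = treeLang N pi po := by
  ext w
  simp only [treeLang, Set.mem_setOf_eq]
  constructor
  · rintro ⟨σ, hfs, hw⟩
    exact choice_backward N N' pi po hWF n t t' hpat hred hfs w hw
  · rintro ⟨σ, hfs, hw⟩
    exact choice_forward N N' pi po hWF n t t' hpat hred hfs w hw
end
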